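/- arXiv:2108.04280 — 6 statements merged into one kernel-verified Lean document; each statement's English description precedes it below -/
import Mathlib

section
/- The function r ↦ r²/Δ(r) − 1/(2κ_+ (r − r_+)), defined on (r_−, ∞) \ {r_+}, extends to a real-analytic function on all of (r_−, ∞). Consequently, every antiderivative r* of r ↦ r²/Δ(r) on (r_+, ∞) is of the form r*(r) = (1/(2κ_+)) log(r − r_+) + f_*(r), where f_* is real-analytic on (r_−, ∞). -/
open Set

/-!
Since `Δ` vanishes at `r₋ ≠ r₊` and `l²Δ` is a quartic without cubic term, it factors as
`l²Δ(r) = (r - r₋)(r - r₊)((r - p)² + q²)` with `q ≠ 0`. Differentiating this factorisation at `r₊`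
shows that the residue `l²r₊² / ((r₊ - r₋)((r₊ - p)² + q²))` of `r²/Δ` at `r₊` equals
`r₊² / Δ'(r₊) = 1/(2κ₊)`. Partial fractions then write `r²/Δ - 1/(2κ₊(r - r₊))` as
`a/(r - r₋) + (b(r - p) + d)/((r - p)² + q²)`, which is analytic on `(r₋, ∞)` and has there the
analytic primitive `a log(r - r₋) + (b/2) log((r - p)² + q²) + (d/q) arctan((r - p)/q)`.
Any two primitives of `r²/Δ` on `(r₊, ∞)` differ by a constant.
-/

theorem quartic_eq_mul_of_roots {R : Type*} [CommRing R] [IsDomain R] {α β γ x₁ x₂ : R}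
    (hx : x₁ ≠ x₂) (h₁ : x₁ ^ 4 + α * x₁ ^ 2 + β * x₁ + γ = 0)
    (h₂ : x₂ ^ 4 + α * x₂ ^ 2 + β * x₂ + γ = 0) (r : R) :
    r ^ 4 + α * r ^ 2 + β * r + γ =
      (r - x₁) * (r - x₂) * (r ^ 2 + (x₁ + x₂) * r + (x₁ ^ 2 + x₁ * x₂ + x₂ ^ 2 + α)) := by
  have hβ : β = -(x₁ + x₂) * (x₁ ^ 2 + x₂ ^ 2 + α) :=
    mul_left_cancel₀ (sub_ne_zero.mpr hx) (by linear_combination h₁ - h₂)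
  linear_combination h₁ + (r - x₁) * hβ

theorem exists_factorization_of_roots {M Q l x₁ x₂ : ℝ} {Δ : ℝ → ℝ} (hl : l ≠ 0)
    (hΔ : ∀ r, Δ r = r ^ 2 - 2 * M * r + r ^ 4 / l ^ 2 + Q ^ 2) (hx : x₁ ≠ x₂)
    (h₁ : Δ x₁ = 0) (h₂ : Δ x₂ = 0) :
    ∃ p q : ℝ, q ≠ 0 ∧ ∀ r, Δ r = (r - x₁) * (r - x₂) * ((r - p) ^ 2 + q ^ 2) / l ^ 2 := by
  have hquartic : ∀ r, l ^ 2 * Δ r = r ^ 4 + l ^ 2 * r ^ 2 + (-2 * M * l ^ 2) * r + Q ^ 2 * l ^ 2 :=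
    fun r => by rw [hΔ]; field_simp; ring
  have hdisc : 0 < (3 * x₁ ^ 2 + 2 * x₁ * x₂ + 3 * x₂ ^ 2) / 4 + l ^ 2 := by
    have : 0 ≤ 3 * x₁ ^ 2 + 2 * x₁ * x₂ + 3 * x₂ ^ 2 := by nlinarith [sq_nonneg (x₁ + x₂)]
    positivity
  refine ⟨-(x₁ + x₂) / 2, √((3 * x₁ ^ 2 + 2 * x₁ * x₂ + 3 * x₂ ^ 2) / 4 + l ^ 2),
    (Real.sqrt_pos.mpr hdisc).ne', fun r => ?_⟩
  rw [eq_div_iff (by positivity), mul_comm, hquartic,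
    quartic_eq_mul_of_roots hx (by rw [← hquartic, h₁, mul_zero]) (by rw [← hquartic, h₂, mul_zero]),
    Real.sq_sqrt hdisc.le]
  ring

theorem exists_partialFraction {c x₁ x₂ p q : ℝ} (hx : x₁ ≠ x₂) (hq : q ≠ 0) :
    ∃ a b d : ℝ, ∀ r, r ≠ x₁ → r ≠ x₂ →
      c * r ^ 2 / ((r - x₁) * (r - x₂) * ((r - p) ^ 2 + q ^ 2)) =
        c * x₂ ^ 2 / ((x₂ - x₁) * ((x₂ - p) ^ 2 + q ^ 2)) / (r - x₂) +
          (a / (r - x₁) + (b * (r - p) + d) / ((r - p) ^ 2 + q ^ 2)) := by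
  set A₁ := c * x₁ ^ 2 / ((x₁ - x₂) * ((x₁ - p) ^ 2 + q ^ 2))
  set A₂ := c * x₂ ^ 2 / ((x₂ - x₁) * ((x₂ - p) ^ 2 + q ^ 2))
  -- `b` and `d` match the `r³` and `r²` coefficients after clearing denominators; the residues
  -- `A₁`, `A₂` make both sides agree at `x₁`, `x₂`, which settles the remaining linear part.
  refine ⟨A₁, -(A₁ + A₂), c + A₁ * (p - x₁) + A₂ * (p - x₂), fun r h₁ h₂ => ?_⟩
  have hG : ∀ y, (y - p) ^ 2 + q ^ 2 ≠ 0 := fun y => by positivity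
  have h₁₂ := sub_ne_zero.mpr hx
  have h₂₁ := sub_ne_zero.mpr hx.symm
  have hr₁ := sub_ne_zero.mpr h₁
  have hr₂ := sub_ne_zero.mpr h₂
  simp only [A₁, A₂]
  field_simp
  ring

theorem deriv_eq_of_forall_eq_sub_mul {𝕜 : Type*} [NontriviallyNormedField 𝕜] {f g : 𝕜 → 𝕜}
    {a : 𝕜} (hfg : ∀ x, f x = (x - a) * g x) (hg : DifferentiableAt 𝕜 g a) :
    deriv f a = g a := by
  have := ((hasDerivAt_id' a).sub_const a).fun_mul hg.hasDerivAt
  rw [funext hfg, this.deriv]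
  simp

theorem deriv_eq_of_factorization {Δ : ℝ → ℝ} {x₁ x₂ p q c : ℝ}
    (hfac : ∀ r, Δ r = (r - x₁) * (r - x₂) * ((r - p) ^ 2 + q ^ 2) / c) :
    deriv Δ x₂ = (x₂ - x₁) * ((x₂ - p) ^ 2 + q ^ 2) / c :=
  deriv_eq_of_forall_eq_sub_mul (g := fun r => (r - x₁) * ((r - p) ^ 2 + q ^ 2) / c)
    (fun r => by rw [hfac]; ring) (by fun_prop)

section PartialFractionPrimitive

noncomputable def partialFractionPrimitive (x₁ p q a b d r : ℝ) : ℝ :=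
  a * Real.log (r - x₁) + b / 2 * Real.log ((r - p) ^ 2 + q ^ 2) +
    d / q * Real.arctan ((r - p) / q)

variable {x₁ p q : ℝ}

theorem hasDerivAt_partialFractionPrimitive (hq : q ≠ 0) (a b d : ℝ) {x : ℝ} (hx : x₁ < x) :
    HasDerivAt (partialFractionPrimitive x₁ p q a b d)
      (a / (x - x₁) + (b * (x - p) + d) / ((x - p) ^ 2 + q ^ 2)) x := by
  have hG : 0 < (x - p) ^ 2 + q ^ 2 := by positivity
  have hlog₁ := ((hasDerivAt_id' x).sub_const x₁).log (sub_pos.mpr hx).ne'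
  have hshift := (hasDerivAt_id' x).sub_const p
  have hlog₂ := ((hshift.fun_pow 2).add_const (q ^ 2)).log hG.ne'
  have harctan := (hshift.div_const q).arctan
  refine (((hlog₁.const_mul a).fun_add (hlog₂.const_mul (b / 2))).fun_add
    (harctan.const_mul (d / q))).congr_deriv ?_
  field_simp
  ring

theorem analyticOnNhd_partialFractionPrimitive (hq : q ≠ 0) (a b d : ℝ) :
    AnalyticOnNhd ℝ (partialFractionPrimitive x₁ p q a b d) (Ioi x₁) := fun x hx => by
  have hx₁ : 0 < x - x₁ := sub_pos.mpr hx
  have hG : 0 < (x - p) ^ 2 + q ^ 2 := by positivity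
  have := (Real.contDiff_arctan.contDiffAt (x := (x - p) / q)).analyticAt
  unfold partialFractionPrimitive
  fun_prop (disch := assumption)

end PartialFractionPrimitive

theorem exists_eq_mul_log_add {f Φ φ : ℝ → ℝ} {x₀ A : ℝ}
    (hf : ∀ x ∈ Ioi x₀, HasDerivAt f (A / (x - x₀) + φ x) x)
    (hΦ : ∀ x ∈ Ioi x₀, HasDerivAt Φ (φ x) x) :
    ∃ C, ∀ x ∈ Ioi x₀, f x = A * Real.log (x - x₀) + (Φ x + C) := by
  have hlog : ∀ x ∈ Ioi x₀, HasDerivAt (fun y => A * Real.log (y - x₀) + Φ y)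
      (A / (x - x₀) + φ x) x := fun x hx => by
    simpa [div_eq_mul_inv] using
      (((hasDerivAt_id' x).sub_const x₀).log (sub_pos.mpr hx).ne').const_mul A |>.fun_add (hΦ x hx)
  obtain ⟨C, hC⟩ := isOpen_Ioi.exists_eq_add_of_deriv_eq isPreconnected_Ioi
    (fun x hx => (hf x hx).differentiableAt.differentiableWithinAt)
    (fun x hx => (hlog x hx).differentiableAt.differentiableWithinAt)
    (fun x hx => (hf x hx).deriv.trans (hlog x hx).deriv.symm)
  exact ⟨C, fun x hx => (hC hx).trans (add_assoc _ _ _)⟩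

theorem stmt_1_general (M Q l : ℝ) (hl : 0 < l)
    (Δ : ℝ → ℝ) (hΔ : ∀ r, Δ r = r ^ 2 - 2 * M * r + r ^ 4 / l ^ 2 + Q ^ 2)
    (rm rp : ℝ) (hmp : rm < rp)
    (hΔm : Δ rm = 0) (hΔp : Δ rp = 0)
    (κp : ℝ) (hκp : κp = deriv Δ rp / (2 * rp ^ 2)) :
    (∃ F : ℝ → ℝ, AnalyticOnNhd ℝ F (Ioi rm) ∧
      ∀ r ∈ Ioi rm, r ≠ rp → F r = r ^ 2 / Δ r - 1 / (2 * κp * (r - rp))) ∧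
    (∀ rstar : ℝ → ℝ, (∀ r ∈ Ioi rp, HasDerivAt rstar (r ^ 2 / Δ r) r) →
      ∃ fstar : ℝ → ℝ, AnalyticOnNhd ℝ fstar (Ioi rm) ∧
        ∀ r ∈ Ioi rp, rstar r = (1 / (2 * κp)) * Real.log (r - rp) + fstar r) := by
  obtain ⟨p, q, hq, hfac⟩ := exists_factorization_of_roots hl.ne' hΔ hmp.ne hΔm hΔp
  have hκ : 1 / (2 * κp) = l ^ 2 * rp ^ 2 / ((rp - rm) * ((rp - p) ^ 2 + q ^ 2)) := by
    rw [hκp, deriv_eq_of_factorization hfac]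
    simp only [div_eq_mul_inv, mul_inv, inv_inv]
    ring
  obtain ⟨a, b, d, hpf⟩ := exists_partialFraction (c := l ^ 2) hmp.ne hq
  set F : ℝ → ℝ := fun r => a / (r - rm) + (b * (r - p) + d) / ((r - p) ^ 2 + q ^ 2)
  have hF : ∀ r ∈ Ioi rm, r ≠ rp → r ^ 2 / Δ r = 1 / (2 * κp) / (r - rp) + F r := by
    intro r hr hne
    rw [hfac, div_div_eq_mul_div, mul_comm, hpf r (ne_of_gt hr) hne, hκ]
  refine ⟨⟨F, fun x hx => ?_, fun r hr hne => by rw [hF r hr hne, div_div]; ring⟩,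
    fun rstar hrstar => ?_⟩
  · have := (sub_pos.mpr (mem_Ioi.mp hx)).ne'
    have : (x - p) ^ 2 + q ^ 2 ≠ 0 := by positivity
    fun_prop (disch := assumption)
  · obtain ⟨C, hC⟩ := exists_eq_mul_log_add (φ := F)
      (fun x hx => hF x (mem_Ioi.mpr (hmp.trans hx)) (ne_of_gt hx) ▸ hrstar x hx)
      (fun x hx => hasDerivAt_partialFractionPrimitive hq a b d (hmp.trans hx))
    exact ⟨fun r => partialFractionPrimitive rm p q a b d r + C,
      (analyticOnNhd_partialFractionPrimitive hq a b d).add analyticOnNhd_const, hC⟩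

/-- the function r ↦ r²/Δ(r) − 1/(2κ₊(r − r₊)) extends real-analytically
to (r_−, ∞); consequently every antiderivative of r²/Δ on (r₊, ∞) has the form
(1/(2κ₊)) log(r − r₊) + f₊(r) with f₊ real-analytic on (r_−, ∞). -/
theorem stmt_1 (M Q l : ℝ) (hM : 0 < M) (hQ : Q ≠ 0) (hl : 0 < l)
    (Δ : ℝ → ℝ) (hΔ : ∀ r, Δ r = r ^ 2 - 2 * M * r + r ^ 4 / l ^ 2 + Q ^ 2)
    (rm rp : ℝ) (hrm : 0 < rm) (hmp : rm < rp)
    (hΔm : Δ rm = 0) (hΔp : Δ rp = 0)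
    (honly : ∀ r, 0 < r → Δ r = 0 → r = rm ∨ r = rp)
    (κp : ℝ) (hκp : κp = deriv Δ rp / (2 * rp ^ 2)) :
    (∃ F : ℝ → ℝ, AnalyticOnNhd ℝ F (Ioi rm) ∧
      ∀ r ∈ Ioi rm, r ≠ rp → F r = r ^ 2 / Δ r - 1 / (2 * κp * (r - rp))) ∧
    (∀ rstar : ℝ → ℝ, (∀ r ∈ Ioi rp, HasDerivAt rstar (r ^ 2 / Δ r) r) →
      ∃ fstar : ℝ → ℝ, AnalyticOnNhd ℝ fstar (Ioi rm) ∧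
        ∀ r ∈ Ioi rp, rstar r = (1 / (2 * κp)) * Real.log (r - rp) + fstar r) :=
  stmt_1_general M Q l hl Δ hΔ rm rp hmp hΔm hΔp κp hκp
end

section
/- Every antiderivative r* of r ↦ r²/Δ(r) on the interval (r_−, r_+) is a real-analytic, strictly decreasing bijection from (r_−, r_+) onto ℝ; in particular r*(r) → −∞ as r → r_+ from below and r*(r) → +∞ as r → r_− from above. -/
/-!
Since `r₋` and `r₊` are roots, `l²Δ(r) = (r - r₋)(r - r₊) q(r)` with the quadratic
`q = deltaCofactor l r₋ r₊ > 0`. Hence `Δ < 0` on `(r₋, r₊)` and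
`r²/Δ(r) ≤ -κ (1/(r - r₋) + 1/(r₊ - r))` for some `κ > 0`, so `r* + κ log ((r - r₋)/(r₊ - r))`
is antitone: this drives `r*` to `+∞` at `r₋` and to `-∞` at `r₊`, and the intermediate value
theorem gives surjectivity. Analyticity holds because an antiderivative of an analytic function
is analytic: integrate its power series termwise.
-/

open Set Filter Topology

section Primitive

variable {𝕜 : Type*} [RCLike 𝕜] {a : ℕ → 𝕜} {x₀ : 𝕜} {r : NNReal}

theorem hasDerivAt_tsum_div_succ_mul_pow (ha : Summable fun n => ‖a n‖ * (r : ℝ) ^ n)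
    {z : 𝕜} (hz : z ∈ Metric.ball x₀ r) :
    HasDerivAt (fun w => ∑' n, a n / (n + 1) * (w - x₀) ^ (n + 1))
      (∑' n, a n * (z - x₀) ^ n) z := by
  refine hasDerivAt_tsum_of_isPreconnected (g := fun n w => a n / (n + 1) * (w - x₀) ^ (n + 1))
    (g' := fun n w => a n * (w - x₀) ^ n) ha Metric.isOpen_ball (convex_ball x₀ r).isPreconnected
    (fun n w _ => ?_) (fun n w hw => ?_) (Metric.mem_ball_self (Metric.pos_of_mem_ball hz))
    ?_ hz
  · have h := (((hasDerivAt_id w).sub_const x₀).pow (n + 1)).const_mul (a n / (n + 1))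
    simp only [id, Nat.add_sub_cancel, Nat.cast_add, Nat.cast_one, mul_one] at h
    refine h.congr_deriv ?_
    field_simp
  · rw [norm_mul, norm_pow, ← dist_eq_norm]
    gcongr
    exact (Metric.mem_ball.mp hw).le
  · simp

theorem analyticAt_tsum_div_succ_mul_pow (ha : Summable fun n => ‖a n‖ * (r : ℝ) ^ n)
    (hr : 0 < r) :
    AnalyticAt 𝕜 (fun w => ∑' n, a n / (n + 1) * (w - x₀) ^ (n + 1)) x₀ := by
  set p := FormalMultilinearSeries.ofScalars 𝕜 fun n => a n / (n + 1)
  have hp : (r : ENNReal) ≤ p.radius := by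
    refine p.le_radius_of_summable (ha.of_nonneg_of_le (fun n => by positivity) fun n => ?_)
    rw [FormalMultilinearSeries.ofScalars_norm, norm_div]
    gcongr
    refine div_le_self (norm_nonneg _) ?_
    norm_cast
    simp
  have hsum : AnalyticAt 𝕜 (fun w => p.sum (w - x₀)) x₀ := by
    simpa using
      ((p.hasFPowerSeriesOnBall ((ENNReal.coe_pos.mpr hr).trans_le hp)).analyticAt).comp_sub x₀
  have hlin : AnalyticAt 𝕜 (fun w => w - x₀) x₀ := by fun_prop
  refine (hlin.mul hsum).congr (Eventually.of_forall fun w => ?_)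
  change (w - x₀) * FormalMultilinearSeries.ofScalarsSum (E := 𝕜) (fun n => a n / (n + 1)) (w - x₀)
    = _
  rw [FormalMultilinearSeries.ofScalarsSum_eq_tsum, ← tsum_mul_left]
  congr 1 with n
  simp only [smul_eq_mul]
  ring

theorem analyticAt_of_eventually_hasDerivAt {f g : 𝕜 → 𝕜} (hg : AnalyticAt 𝕜 g x₀)
    (hf : ∀ᶠ x in 𝓝 x₀, HasDerivAt f (g x) x) : AnalyticAt 𝕜 f x₀ := by
  obtain ⟨p, R, hp⟩ := hg
  obtain ⟨ε, hε, hfε⟩ := Metric.eventually_nhds_iff_ball.mp hf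
  obtain ⟨r, hr0, hr⟩ := ENNReal.lt_iff_exists_nnreal_btwn.mp
    (lt_min hp.r_pos (ENNReal.ofReal_pos.mpr hε))
  have hrR : (r : ENNReal) < R := hr.trans_le (min_le_left _ _)
  have hrε : Metric.ball x₀ r ⊆ Metric.ball x₀ ε := Metric.ball_subset_ball
    ((ENNReal.le_ofReal_iff_toReal_le ENNReal.coe_ne_top hε.le).mp (hr.le.trans (min_le_right _ _)))
  have ha : Summable fun n => ‖p.coeff n‖ * (r : ℝ) ^ n := by
    simpa only [p.norm_apply_eq_norm_coef] using p.summable_norm_mul_pow (hrR.trans_le hp.r_le)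
  have hg : ∀ z ∈ Metric.ball x₀ r, g z = ∑' n, p.coeff n * (z - x₀) ^ n := by
    intro z hz
    refine ((hp.hasSum_sub ?_).tsum_eq).symm.trans ?_
    · exact Metric.eball_subset_eball hrR.le (by rwa [Metric.eball_coe])
    · simp [mul_comm]
  obtain ⟨c, hc⟩ := Metric.isOpen_ball.exists_eq_add_of_deriv_eq (convex_ball x₀ r).isPreconnected
    (f := f) (g := fun w => ∑' n, p.coeff n / (n + 1) * (w - x₀) ^ (n + 1))
    (fun z hz => (hfε z (hrε hz)).differentiableAt.differentiableWithinAt)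
    (fun z hz => (hasDerivAt_tsum_div_succ_mul_pow ha hz).differentiableAt.differentiableWithinAt)
    (fun z hz => by
      rw [(hfε z (hrε hz)).deriv, (hasDerivAt_tsum_div_succ_mul_pow ha hz).deriv, hg z hz])
  replace hr0 : 0 < r := ENNReal.coe_pos.mp hr0
  refine ((analyticAt_tsum_div_succ_mul_pow ha hr0).add (analyticAt_const (v := c))).congr ?_
  filter_upwards [Metric.ball_mem_nhds x₀ (NNReal.coe_pos.mpr hr0)] with z hz
  exact (hc hz).symm

end Primitive

section LogBarrier

variable {a b : ℝ}

theorem hasDerivAt_log_sub_sub_log_sub {x : ℝ} (hx : x ∈ Ioo a b) :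
    HasDerivAt (fun y => Real.log (y - a) - Real.log (b - y)) ((x - a)⁻¹ + (b - x)⁻¹) x := by
  have h₁ := ((hasDerivAt_id x).sub_const a).log (sub_pos.mpr hx.1).ne'
  have h₂ := ((hasDerivAt_id x).const_sub b).log (sub_pos.mpr hx.2).ne'
  refine (h₁.sub h₂).congr_deriv ?_
  simp only [id]
  ring

theorem tendsto_log_sub_sub_log_sub_nhdsLT (hab : a < b) :
    Tendsto (fun y => Real.log (y - a) - Real.log (b - y)) (𝓝[<] b) atTop := by
  have hlog : Tendsto (fun y => Real.log (y - a)) (𝓝[<] b) (𝓝 (Real.log (b - a))) :=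
    ((continuous_id.sub continuous_const).tendsto b |>.log (sub_pos.mpr hab).ne').mono_left
      nhdsWithin_le_nhds
  have hsub : Tendsto (fun y => b - y) (𝓝[<] b) (𝓝[>] 0) :=
    tendsto_nhdsWithin_iff.mpr ⟨((continuous_const.sub continuous_id).tendsto' b 0
      (sub_self b)).mono_left nhdsWithin_le_nhds,
      eventually_mem_nhdsWithin.mono fun y hy => show 0 < b - y from sub_pos.mpr hy⟩
  exact hlog.add_atTop (tendsto_neg_atBot_atTop.comp (Real.tendsto_log_nhdsGT_zero.comp hsub))

theorem tendsto_log_sub_sub_log_sub_nhdsGT (hab : a < b) :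
    Tendsto (fun y => Real.log (y - a) - Real.log (b - y)) (𝓝[>] a) atBot := by
  have hlog : Tendsto (fun y => Real.log (b - y)) (𝓝[>] a) (𝓝 (Real.log (b - a))) :=
    ((continuous_const.sub continuous_id).tendsto a |>.log (sub_pos.mpr hab).ne').mono_left
      nhdsWithin_le_nhds
  have hsub : Tendsto (fun y => y - a) (𝓝[>] a) (𝓝[>] 0) :=
    tendsto_nhdsWithin_iff.mpr ⟨((continuous_id.sub continuous_const).tendsto' a 0
      (sub_self a)).mono_left nhdsWithin_le_nhds,
      eventually_mem_nhdsWithin.mono fun y hy => show 0 < y - a from sub_pos.mpr hy⟩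
  exact (Real.tendsto_log_nhdsGT_zero.comp hsub).atBot_add hlog.neg

theorem tendsto_of_hasDerivAt_le_neg_mul_inv_add_inv {F F' : ℝ → ℝ} {κ : ℝ} (hab : a < b)
    (hκ : 0 < κ) (hF : ∀ x ∈ Ioo a b, HasDerivAt F (F' x) x)
    (hF' : ∀ x ∈ Ioo a b, F' x ≤ -(κ * ((x - a)⁻¹ + (b - x)⁻¹))) :
    Tendsto F (𝓝[>] a) atTop ∧ Tendsto F (𝓝[<] b) atBot := by
  set L := fun y => Real.log (y - a) - Real.log (b - y)
  have hderiv : ∀ x ∈ Ioo a b,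
      HasDerivAt (fun y => F y + κ * L y) (F' x + κ * ((x - a)⁻¹ + (b - x)⁻¹)) x := fun x hx =>
    (hF x hx).add ((hasDerivAt_log_sub_sub_log_sub hx).const_mul κ)
  have hanti : AntitoneOn (fun y => F y + κ * L y) (Ioo a b) := by
    refine antitoneOn_of_hasDerivWithinAt_nonpos (convex_Ioo a b)
      (f' := fun x => F' x + κ * ((x - a)⁻¹ + (b - x)⁻¹))
      (fun x hx => (hderiv x hx).continuousAt.continuousWithinAt) (fun x hx => ?_) (fun x hx => ?_)
    all_goals rw [interior_Ioo] at hx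
    · exact (hderiv x hx).hasDerivWithinAt
    · linarith [hF' x hx]
  obtain ⟨c, hc⟩ := nonempty_Ioo.mpr hab
  constructor
  · have hlow : ∀ y ∈ Ioo a c, F c + κ * L c + -κ * L y ≤ F y := fun y hy => by
      have := hanti ⟨hy.1, hy.2.trans hc.2⟩ hc hy.2.le
      linarith
    refine tendsto_atTop_mono' _ ?_ (tendsto_atTop_add_const_left _ (F c + κ * L c)
      ((tendsto_log_sub_sub_log_sub_nhdsGT hab).const_mul_atBot_of_neg (neg_neg_of_pos hκ)))
    filter_upwards [Ioo_mem_nhdsGT hc.1] with y hy using hlow y hy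
  · have hup : ∀ y ∈ Ioo c b, F y ≤ F c + κ * L c + -κ * L y := fun y hy => by
      have := hanti hc ⟨hc.1.trans hy.1, hy.2⟩ hy.1.le
      linarith
    refine tendsto_atBot_mono' _ ?_ (tendsto_atBot_add_const_left _ (F c + κ * L c)
      ((tendsto_log_sub_sub_log_sub_nhdsLT hab).const_mul_atTop_of_neg (neg_neg_of_pos hκ)))
    filter_upwards [Ioo_mem_nhdsLT hc.2] with y hy using hup y hy

end LogBarrier

section Cofactor

variable {M Q l rm rp r : ℝ}

def deltaCofactor (l rm rp r : ℝ) : ℝ :=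
  r ^ 2 + (rm + rp) * r + (l ^ 2 + (rm + rp) ^ 2 - rm * rp)

theorem deltaCofactor_pos (hl : l ≠ 0) : 0 < deltaCofactor l rm rp r := by
  unfold deltaCofactor
  nlinarith [sq_nonneg (r + (rm + rp) / 2), sq_nonneg (rm - rp), sq_pos_of_ne_zero hl]

theorem deltaCofactor_le (hrm : 0 ≤ rm) (hr : 0 ≤ r) (hrp : r ≤ rp) :
    deltaCofactor l rm rp r ≤ deltaCofactor l rm rp rp := by
  unfold deltaCofactor
  nlinarith

theorem delta_eq_mul_deltaCofactor (hl : l ≠ 0) (hne : rm ≠ rp)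
    (hm : rm ^ 2 - 2 * M * rm + rm ^ 4 / l ^ 2 + Q ^ 2 = 0)
    (hp : rp ^ 2 - 2 * M * rp + rp ^ 4 / l ^ 2 + Q ^ 2 = 0) (r : ℝ) :
    r ^ 2 - 2 * M * r + r ^ 4 / l ^ 2 + Q ^ 2 =
      (r - rm) * (r - rp) * deltaCofactor l rm rp r / l ^ 2 := by
  unfold deltaCofactor
  field_simp at hm hp ⊢
  refine mul_left_cancel₀ (sub_ne_zero.mpr hne.symm) ?_
  linear_combination (rp - r) * hm + (r - rm) * hp

theorem sq_div_le_neg_mul_inv_add_inv (hl : l ≠ 0) (hrm : 0 < rm) (hr : r ∈ Ioo rm rp) :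
    r ^ 2 / ((r - rm) * (r - rp) * deltaCofactor l rm rp r / l ^ 2) ≤
      -(l ^ 2 * rm ^ 2 / ((rp - rm) * deltaCofactor l rm rp rp) * ((r - rm)⁻¹ + (rp - r)⁻¹)) := by
  have h₁ : 0 < r - rm := sub_pos.mpr hr.1
  have h₂ : 0 < rp - r := sub_pos.mpr hr.2
  have h₃ : r - rp ≠ 0 := by linarith
  have h₄ : rp - rm ≠ 0 := by linarith
  have hq : 0 < deltaCofactor l rm rp r := deltaCofactor_pos hl
  calc r ^ 2 / ((r - rm) * (r - rp) * deltaCofactor l rm rp r / l ^ 2)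
      = -(l ^ 2 * r ^ 2 / ((r - rm) * (rp - r) * deltaCofactor l rm rp r)) := by
        field_simp
        ring
    _ ≤ -(l ^ 2 * rm ^ 2 / ((r - rm) * (rp - r) * deltaCofactor l rm rp rp)) := by
        gcongr
        · exact hr.1.le
        · exact deltaCofactor_le hrm.le (hrm.trans hr.1).le hr.2.le
    _ = -(l ^ 2 * rm ^ 2 / ((rp - rm) * deltaCofactor l rm rp rp) *
          ((r - rm)⁻¹ + (rp - r)⁻¹)) := by
        field_simp
        ring

end Cofactor

theorem stmt_3_general (M Q l : ℝ) (hl : 0 < l)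
    (Δ : ℝ → ℝ) (hΔ : ∀ r, Δ r = r ^ 2 - 2 * M * r + r ^ 4 / l ^ 2 + Q ^ 2)
    (rm rp : ℝ) (hrm : 0 < rm) (hmp : rm < rp)
    (hΔm : Δ rm = 0) (hΔp : Δ rp = 0) :
    ∀ rstar : ℝ → ℝ, (∀ r ∈ Ioo rm rp, HasDerivAt rstar (r ^ 2 / Δ r) r) →
      AnalyticOnNhd ℝ rstar (Ioo rm rp) ∧
      StrictAntiOn rstar (Ioo rm rp) ∧
      BijOn rstar (Ioo rm rp) univ ∧
      Tendsto rstar (nhdsWithin rp (Iio rp)) atBot ∧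
      Tendsto rstar (nhdsWithin rm (Ioi rm)) atTop := by
  intro rstar hder
  have hl₀ : l ≠ 0 := hl.ne'
  have hΔ_eq : ∀ r, Δ r = (r - rm) * (r - rp) * deltaCofactor l rm rp r / l ^ 2 := fun r => by
    rw [hΔ]
    exact delta_eq_mul_deltaCofactor hl₀ hmp.ne (hΔ rm ▸ hΔm) (hΔ rp ▸ hΔp) r
  have hΔ_neg : ∀ r ∈ Ioo rm rp, Δ r < 0 := fun r hr => by
    rw [hΔ_eq]
    exact div_neg_of_neg_of_pos (mul_neg_of_neg_of_pos
      (mul_neg_of_pos_of_neg (sub_pos.mpr hr.1) (sub_neg.mpr hr.2)) (deltaCofactor_pos hl₀))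
      (by positivity)
  have hanalytic : AnalyticOnNhd ℝ rstar (Ioo rm rp) := fun x hx => by
    have hΔ_an : AnalyticAt ℝ Δ x := by
      rw [funext hΔ]
      fun_prop
    exact analyticAt_of_eventually_hasDerivAt ((analyticAt_id.pow 2).div hΔ_an (hΔ_neg x hx).ne)
      (eventually_of_mem (isOpen_Ioo.mem_nhds hx) hder)
  have hcont : ContinuousOn rstar (Ioo rm rp) := fun x hx =>
    (hder x hx).continuousAt.continuousWithinAt
  have hanti : StrictAntiOn rstar (Ioo rm rp) := by
    refine strictAntiOn_of_hasDerivWithinAt_neg (f' := fun r => r ^ 2 / Δ r) (convex_Ioo rm rp)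
      hcont (fun x hx => ?_) (fun x hx => ?_)
    all_goals rw [interior_Ioo] at hx
    · exact (hder x hx).hasDerivWithinAt
    · exact div_neg_of_pos_of_neg (pow_pos (hrm.trans hx.1) 2) (hΔ_neg x hx)
  have hκ : 0 < l ^ 2 * rm ^ 2 / ((rp - rm) * deltaCofactor l rm rp rp) :=
    div_pos (by positivity) (mul_pos (sub_pos.mpr hmp) (deltaCofactor_pos hl₀))
  obtain ⟨htop, hbot⟩ := tendsto_of_hasDerivAt_le_neg_mul_inv_add_inv hmp hκ hder
    fun r hr => hΔ_eq r ▸ sq_div_le_neg_mul_inv_add_inv hl₀ hrm hr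
  refine ⟨hanalytic, hanti, ⟨mapsTo_univ _ _, hanti.injOn, ?_⟩, hbot, htop⟩
  exact hcont.surjOn_of_tendsto' (nonempty_Ioo.mpr hmp)
    ((tendsto_comp_coe_Ioo_atBot hmp).mpr htop) ((tendsto_comp_coe_Ioo_atTop hmp).mpr hbot)

/-- every antiderivative of r ↦ r²/Δ(r) on (r₋, r₊) is a real-analytic,
strictly decreasing bijection from (r₋, r₊) onto ℝ, tending to −∞ at r₊⁻ and to +∞
at r₋⁺. -/
theorem stmt_3 (M Q l : ℝ) (hM : 0 < M) (hQ : Q ≠ 0) (hl : 0 < l)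
    (Δ : ℝ → ℝ) (hΔ : ∀ r, Δ r = r ^ 2 - 2 * M * r + r ^ 4 / l ^ 2 + Q ^ 2)
    (rm rp : ℝ) (hrm : 0 < rm) (hmp : rm < rp)
    (hΔm : Δ rm = 0) (hΔp : Δ rp = 0)
    (honly : ∀ r, 0 < r → Δ r = 0 → r = rm ∨ r = rp) :
    ∀ rstar : ℝ → ℝ, (∀ r ∈ Ioo rm rp, HasDerivAt rstar (r ^ 2 / Δ r) r) →
      AnalyticOnNhd ℝ rstar (Ioo rm rp) ∧
      StrictAntiOn rstar (Ioo rm rp) ∧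
      BijOn rstar (Ioo rm rp) univ ∧
      Tendsto rstar (nhdsWithin rp (Iio rp)) atBot ∧
      Tendsto rstar (nhdsWithin rm (Ioi rm)) atTop :=
  stmt_3_general M Q l hl Δ hΔ rm rp hrm hmp hΔm hΔp
end

section
/- Set h(r) := Δ(r)/r² and, for ℓ ∈ ℤ_{≥0}, define the potential V_ℓ(x) := h(r(x))·( h′(r(x))/r(x) + ℓ(ℓ+1)/r(x)² − α/l² ) for x ∈ ℝ, where h′ = dh/dr. Then there exists a constant C > 0, depending only on M, Q, l, α and the chosen normalization of r*, such that for every integer ℓ ≥ 1 and every x ∈ ℝ: |V_ℓ(x)| ≤ C ℓ² e^{−2 min(κ_+, κ_−)|x|}, |V_ℓ′(x)| ≤ C ℓ² e^{−2 min(κ_+, κ_−)|x|}, and |V_ℓ″(x)| ≤ C ℓ² e^{−2 min(κ_+, κ_−)|x|}. -/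
/-!
Since `Δ` vanishes at `r₋ < r₊`, it factors as `(r - r₋)(r - r₊) g(r)` with a positive quadratic
`g`, and `r(x)` solves the autonomous equation `r' = h(r) = (r - r₋)(r - r₊) q(r)` with
`q = g / r² > 0`. Near `r₋` (as `x → +∞`) the distance `u = r - r₋` obeys `u' = -u G` with
`G → 2κ₋`: a first comparison of `log u` with the crude rate `min G` makes `u` integrable, and then
`|G - 2κ₋| ≤ L u` upgrades the rate to `2κ₋`; near `r₊` one argues symmetrically. Hence
`|h(r(x))| ≲ e^{-2 min(κ₊, κ₋)|x|}`. Differentiation in `x` is `h · d/dr`, so `V_ℓ`, `V_ℓ'` and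
`V_ℓ''` are all of the form `h(r(x)) Φ(r(x))` with `Φ` continuous on `[r₋, r₊]` and affine in
`ℓ(ℓ + 1) ≤ 2ℓ²`.
-/

open Set Real Filter

theorem le_mul_exp_sub_of_hasDerivAt {u G φ φ' : ℝ → ℝ} (hu : ∀ x, 0 < u x)
    (hu' : ∀ x, HasDerivAt u (-(u x * G x)) x) (hφ : ∀ x, HasDerivAt φ (φ' x) x)
    (hφG : ∀ x, 0 ≤ x → φ' x ≤ G x) {x : ℝ} (hx : 0 ≤ x) :
    u x ≤ u 0 * exp (φ 0 - φ x) := by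
  have hderiv : ∀ y, HasDerivAt (fun y => log (u y) + φ y) (-G y + φ' y) y := fun y => by
    refine (((hu' y).log (hu y).ne').add (hφ y)).congr_deriv ?_
    field_simp [(hu y).ne']
  have hanti : AntitoneOn (fun y => log (u y) + φ y) (Ici 0) := by
    refine antitoneOn_of_hasDerivWithinAt_nonpos (convex_Ici 0)
      (fun y _ => (hderiv y).continuousAt.continuousWithinAt)
      (fun y _ => (hderiv y).hasDerivWithinAt) fun y hy => ?_
    rw [interior_Ici] at hy
    linarith [hφG y (le_of_lt hy)]
  have hlog : log (u x) ≤ log (u 0) + (φ 0 - φ x) := by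
    linarith [hanti self_mem_Ici hx hx]
  calc u x = exp (log (u x)) := (exp_log (hu x)).symm
    _ ≤ exp (log (u 0) + (φ 0 - φ x)) := exp_le_exp.2 hlog
    _ = u 0 * exp (φ 0 - φ x) := by rw [exp_add, exp_log (hu 0)]

theorem le_mul_exp_of_hasDerivAt {u G : ℝ → ℝ} {κ c L : ℝ} (hc : 0 < c) (hL : 0 ≤ L)
    (hu : ∀ x, 0 < u x) (hu' : ∀ x, HasDerivAt u (-(u x * G x)) x)
    (hGc : ∀ x, 0 ≤ x → c ≤ G x) (hGκ : ∀ x, 0 ≤ x → κ - G x ≤ L * u x) {x : ℝ} (hx : 0 ≤ x) :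
    u x ≤ u 0 * exp (L * u 0 / c) * exp (-κ * x) := by
  have hexp : ∀ y, 0 ≤ y → u y ≤ u 0 * exp (-c * y) := fun y hy => by
    simpa using le_mul_exp_sub_of_hasDerivAt hu hu' (fun y => (hasDerivAt_id y).const_mul c)
      (by simpa using hGc) hy
  -- integrating `κ - G ≤ L u ≤ L u(0) e^{-c y}` costs at most the constant `A`
  set A := L * u 0 / c
  have hφ : ∀ y, HasDerivAt (fun y => κ * y + A * exp (-c * y))
      (κ - L * u 0 * exp (-c * y)) y := fun y => by
    refine (((hasDerivAt_id' y).const_mul κ).add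
      ((((hasDerivAt_id' y).const_mul (-c)).exp).const_mul A)).congr_deriv ?_
    simp only [A]
    field_simp
    ring
  have hφG : ∀ y, 0 ≤ y → κ - L * u 0 * exp (-c * y) ≤ G y := fun y hy => by
    nlinarith [hGκ y hy, mul_le_mul_of_nonneg_left (hexp y hy) hL]
  calc u x ≤ u 0 * exp ((κ * 0 + A * exp (-c * 0)) - (κ * x + A * exp (-c * x))) :=
        le_mul_exp_sub_of_hasDerivAt hu hu' hφ hφG hx
    _ ≤ u 0 * exp (A + -κ * x) := by
        gcongr
        · exact (hu 0).le
        simp only [mul_zero, zero_add, exp_zero, mul_one]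
        nlinarith [exp_pos (-c * x), show 0 ≤ A from div_nonneg (mul_nonneg hL (hu 0).le) hc.le]
    _ = u 0 * exp A * exp (-κ * x) := by rw [exp_add, mul_assoc]

section LogisticFlow

variable {a b : ℝ} {K : NNReal} {q r : ℝ → ℝ}

theorem exists_sub_le_mul_exp_of_hasDerivAt (hq : LipschitzOnWith K q (Icc a b))
    (hq_pos : ∀ s ∈ Icc a b, 0 < q s) (hr : ∀ x, r x ∈ Ioo a b)
    (hr' : ∀ x, HasDerivAt r ((r x - a) * (r x - b) * q (r x)) x) :
    ∃ C > 0, ∀ x, 0 ≤ x → r x - a ≤ C * exp (-((b - a) * q a) * x) := by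
  have hr_Icc : ∀ x, r x ∈ Icc a b := fun x => Ioo_subset_Icc_self (hr x)
  have hab : a ≤ b := ((hr 0).1.trans (hr 0).2).le
  obtain ⟨s₀, hs₀, hs₀_min⟩ := isCompact_Icc.exists_isMinOn (nonempty_Icc.2 hab)
    hq.continuousOn
  obtain ⟨B, hB⟩ := isCompact_Icc.exists_bound_of_continuousOn hq.continuousOn
  have hr_anti : Antitone r := antitone_of_hasDerivAt_nonpos hr' fun x =>
    mul_nonpos_of_nonpos_of_nonneg
      (mul_neg_of_pos_of_neg (sub_pos.2 (hr x).1) (sub_neg.2 (hr x).2)).le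
      (hq_pos (r x) (hr_Icc x)).le
  have hq_sub : ∀ x, q a - q (r x) ≤ K * (r x - a) := fun x => by
    have hlip := hq.dist_le_mul a (left_mem_Icc.2 hab) (r x) (hr_Icc x)
    rw [dist_eq_norm, dist_comm, dist_eq_norm, Real.norm_eq_abs, Real.norm_eq_abs,
      abs_of_pos (sub_pos.2 (hr x).1)] at hlip
    exact (le_abs_self _).trans hlip
  have hc : 0 < (b - r 0) * q s₀ := mul_pos (by linarith [(hr 0).2]) (hq_pos s₀ hs₀)
  refine ⟨(r 0 - a) * exp (((b - a) * K + B) * (r 0 - a) / ((b - r 0) * q s₀)),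
    mul_pos (by linarith [(hr 0).1]) (exp_pos _), fun x hx => ?_⟩
  refine le_mul_exp_of_hasDerivAt (u := fun x => r x - a) (G := fun x => (b - r x) * q (r x))
    hc ?_ (fun x => by linarith [(hr x).1])
    (fun x => ((hr' x).sub_const a).congr_deriv (by ring)) (fun y hy => ?_) (fun y hy => ?_) hx
  · exact add_nonneg (mul_nonneg (sub_nonneg.2 hab) K.2)
      ((norm_nonneg _).trans (hB a (left_mem_Icc.2 hab)))
  · exact mul_le_mul (by linarith [hr_anti hy]) (hs₀_min (hr_Icc y))
      (hq_pos s₀ hs₀).le (by linarith [(hr y).2])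
  · have hqB : q (r y) ≤ B := (le_abs_self _).trans (hB (r y) (hr_Icc y))
    have hsplit : (b - a) * q a - (b - r y) * q (r y)
        = (b - a) * (q a - q (r y)) + (r y - a) * q (r y) := by ring
    rw [hsplit]
    nlinarith [mul_le_mul_of_nonneg_left (hq_sub y) (sub_nonneg.2 hab),
      mul_le_mul_of_nonneg_left hqB (sub_pos.2 (hr y).1).le]

theorem exists_sub_le_mul_exp_of_hasDerivAt_of_nonpos (hq : LipschitzOnWith K q (Icc a b))
    (hq_pos : ∀ s ∈ Icc a b, 0 < q s) (hr : ∀ x, r x ∈ Ioo a b)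
    (hr' : ∀ x, HasDerivAt r ((r x - a) * (r x - b) * q (r x)) x) :
    ∃ C > 0, ∀ x, x ≤ 0 → b - r x ≤ C * exp ((b - a) * q b * x) := by
  -- `a + b - r (-x)` solves the same kind of equation, with the ends `a` and `b` exchanged
  have hreflect : MapsTo (fun s => a + b - s) (Icc a b) (Icc a b) :=
    fun s hs => ⟨by linarith [hs.2], by linarith [hs.1]⟩
  obtain ⟨C, hC, hdecay⟩ := exists_sub_le_mul_exp_of_hasDerivAt
    (q := fun s => q (a + b - s)) (r := fun x => a + b - r (-x))
    (hq.comp (IsometryEquiv.subLeft (a + b)).isometry.lipschitz.lipschitzOnWith hreflect)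
    (fun s hs => hq_pos _ (hreflect hs))
    (fun x => ⟨by linarith [(hr (-x)).2], by linarith [(hr (-x)).1]⟩)
    (fun x => by
      refine (((hr' (-x)).comp x (hasDerivAt_neg x)).const_sub (a + b)).congr_deriv ?_
      simp only [sub_sub_cancel]
      ring)
  refine ⟨C, hC, fun x hx => ?_⟩
  calc b - r x = a + b - r (- -x) - a := by rw [neg_neg]; ring
    _ ≤ C * exp (-((b - a) * q (a + b - a)) * -x) := hdecay (-x) (neg_nonneg.2 hx)
    _ = C * exp ((b - a) * q b * x) := by rw [add_sub_cancel_left, neg_mul_neg]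

theorem exists_abs_le_mul_exp_of_hasDerivAt (hq : LipschitzOnWith K q (Icc a b))
    (hq_pos : ∀ s ∈ Icc a b, 0 < q s) (hr : ∀ x, r x ∈ Ioo a b)
    (hr' : ∀ x, HasDerivAt r ((r x - a) * (r x - b) * q (r x)) x) :
    ∃ C > 0, ∀ x, |(r x - a) * (r x - b) * q (r x)| ≤
      C * exp (-min ((b - a) * q a) ((b - a) * q b) * |x|) := by
  have hr_Icc : ∀ x, r x ∈ Icc a b := fun x => Ioo_subset_Icc_self (hr x)
  have hab : 0 < b - a := sub_pos.2 ((hr 0).1.trans (hr 0).2)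
  obtain ⟨C₁, hC₁, hdecay₁⟩ := exists_sub_le_mul_exp_of_hasDerivAt hq hq_pos hr hr'
  obtain ⟨C₂, hC₂, hdecay₂⟩ := exists_sub_le_mul_exp_of_hasDerivAt_of_nonpos hq hq_pos hr hr'
  obtain ⟨B, hB⟩ := isCompact_Icc.exists_bound_of_continuousOn hq.continuousOn
  have hqB : ∀ x, q (r x) ≤ B := fun x => (le_abs_self _).trans (hB (r x) (hr_Icc x))
  have hB_pos : 0 < B := (hq_pos _ (hr_Icc 0)).trans_le (hqB 0)
  have hbound : ∀ x, |(r x - a) * (r x - b) * q (r x)| ≤ (b - a) * B * (r x - a) ∧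
      |(r x - a) * (r x - b) * q (r x)| ≤ (b - a) * B * (b - r x) := fun x => by
    have hq₀ := (hq_pos _ (hr_Icc x)).le
    have hpos := mul_pos (sub_pos.2 (hr x).1) (sub_pos.2 (hr x).2)
    have hleft : (b - r x) * q (r x) ≤ (b - a) * B :=
      mul_le_mul (by linarith [(hr x).1]) (hqB x) hq₀ hab.le
    have hright : (r x - a) * q (r x) ≤ (b - a) * B :=
      mul_le_mul (by linarith [(hr x).2]) (hqB x) hq₀ hab.le
    rw [abs_of_nonpos (by nlinarith)]
    exact ⟨by nlinarith [mul_le_mul_of_nonneg_left hleft (sub_pos.2 (hr x).1).le],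
      by nlinarith [mul_le_mul_of_nonneg_left hright (sub_pos.2 (hr x).2).le]⟩
  set m := min ((b - a) * q a) ((b - a) * q b)
  have hBab : 0 < (b - a) * B := mul_pos hab hB_pos
  refine ⟨(b - a) * B * (C₁ + C₂), by positivity, fun x => ?_⟩
  have hE := exp_pos (-m * |x|)
  rcases le_total 0 x with hx | hx
  · have hexp : exp (-((b - a) * q a) * x) ≤ exp (-m * |x|) := by
      rw [abs_of_nonneg hx]
      exact exp_le_exp.2 (by nlinarith [min_le_left ((b - a) * q a) ((b - a) * q b)])
    calc _ ≤ (b - a) * B * (r x - a) := (hbound x).1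
      _ ≤ (b - a) * B * (C₁ * exp (-m * |x|)) := by
          gcongr; exact (hdecay₁ x hx).trans (by gcongr)
      _ ≤ (b - a) * B * (C₁ + C₂) * exp (-m * |x|) := by nlinarith [mul_pos hBab (mul_pos hC₂ hE)]
  · have hexp : exp ((b - a) * q b * x) ≤ exp (-m * |x|) := by
      rw [abs_of_nonpos hx]
      exact exp_le_exp.2 (by nlinarith [min_le_right ((b - a) * q a) ((b - a) * q b)])
    calc _ ≤ (b - a) * B * (b - r x) := (hbound x).2
      _ ≤ (b - a) * B * (C₂ * exp (-m * |x|)) := by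
          gcongr; exact (hdecay₂ x hx).trans (by gcongr)
      _ ≤ (b - a) * B * (C₁ + C₂) * exp (-m * |x|) := by nlinarith [mul_pos hBab (mul_pos hC₁ hE)]

end LogisticFlow

theorem hasDerivAt_of_leftInverse_of_neg {a b : ℝ} {φ φ' ψ : ℝ → ℝ}
    (hφ : ∀ s ∈ Ioo a b, HasDerivAt φ (φ' s) s) (hφ' : ∀ s ∈ Ioo a b, φ' s < 0)
    (hψ : ∀ x, ψ x ∈ Ioo a b) (hφψ : ∀ x, φ (ψ x) = x) (hψφ : ∀ s ∈ Ioo a b, ψ (φ s) = s)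
    (x : ℝ) : HasDerivAt ψ (φ' (ψ x))⁻¹ x := by
  have hφ_anti : StrictAntiOn φ (Ioo a b) :=
    strictAntiOn_of_hasDerivWithinAt_neg (convex_Ioo a b)
      (fun s hs => (hφ s hs).continuousAt.continuousWithinAt)
      (fun s hs => (hφ s (interior_subset hs)).hasDerivWithinAt)
      (fun s hs => hφ' s (interior_subset hs))
  have hψ_anti : Antitone ψ := fun y z hyz => by
    by_contra! hlt
    have hφ_lt := hφ_anti (hψ y) (hψ z) hlt
    rw [hφψ, hφψ] at hφ_lt
    linarith
  have hneg_image : Ioo (-b) (-a) ⊆ (fun y => -ψ y) '' univ := fun t ht =>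
    ⟨φ (-t), mem_univ _, show -ψ (φ (-t)) = t by
      rw [hψφ _ ⟨by linarith [ht.2], by linarith [ht.1]⟩, neg_neg]⟩
  have hcont : ContinuousAt ψ x := by
    have hneg := continuousAt_of_monotoneOn_of_image_mem_nhds
      (fun y _ z _ hyz => neg_le_neg (hψ_anti hyz)) univ_mem
      (mem_of_superset (Ioo_mem_nhds (neg_lt_neg (hψ x).2) (neg_lt_neg (hψ x).1)) hneg_image)
    simpa only [Function.comp_def, neg_neg] using continuous_neg.continuousAt.comp hneg
  exact (hφ (ψ x) (hψ x)).of_local_left_inverse hcont (hφ' _ (hψ x)).ne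
    (Eventually.of_forall hφψ)

def DerivsBoundedBy (W B : ℝ → ℝ) : Prop :=
  Differentiable ℝ W ∧ Differentiable ℝ (deriv W) ∧
    ∀ x, |W x| ≤ B x ∧ |deriv W x| ≤ B x ∧ |deriv (deriv W) x| ≤ B x

theorem DerivsBoundedBy.mono {W B B' : ℝ → ℝ} (hW : DerivsBoundedBy W B) (hB : ∀ x, B x ≤ B' x) :
    DerivsBoundedBy W B' :=
  ⟨hW.1, hW.2.1, fun x =>
    ⟨(hW.2.2 x).1.trans (hB x), (hW.2.2 x).2.1.trans (hB x), (hW.2.2 x).2.2.trans (hB x)⟩⟩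

theorem DerivsBoundedBy.add_const_mul {W₀ W₁ B₀ B₁ : ℝ → ℝ} {c : ℝ}
    (h₀ : DerivsBoundedBy W₀ B₀) (h₁ : DerivsBoundedBy W₁ B₁) (hc : 0 ≤ c) :
    DerivsBoundedBy (fun x => W₀ x + c * W₁ x) (fun x => B₀ x + c * B₁ x) := by
  obtain ⟨hd₀, hd₀', hb₀⟩ := h₀
  obtain ⟨hd₁, hd₁', hb₁⟩ := h₁
  have hderiv : deriv (fun x => W₀ x + c * W₁ x) = fun x => deriv W₀ x + c * deriv W₁ x :=
    funext fun x => ((hd₀ x).hasDerivAt.add ((hd₁ x).hasDerivAt.const_mul c)).deriv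
  have hderiv2 : deriv (deriv (fun x => W₀ x + c * W₁ x))
      = fun x => deriv (deriv W₀) x + c * deriv (deriv W₁) x := by
    rw [hderiv]
    exact funext fun x => ((hd₀' x).hasDerivAt.add ((hd₁' x).hasDerivAt.const_mul c)).deriv
  have habs : ∀ {u v U V : ℝ}, |u| ≤ U → |v| ≤ V → |u + c * v| ≤ U + c * V := fun hu hv =>
    (abs_add_le _ _).trans (by rw [abs_mul, abs_of_nonneg hc]; gcongr)
  refine ⟨hd₀.add (hd₁.const_mul c), ?_, fun x => ?_⟩
  · rw [hderiv]; exact hd₀'.add (hd₁'.const_mul c)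
  · obtain ⟨b₀, b₀', b₀''⟩ := hb₀ x
    obtain ⟨b₁, b₁', b₁''⟩ := hb₁ x
    rw [hderiv2, hderiv]
    exact ⟨habs b₀ b₁, habs b₀' b₁', habs b₀'' b₁''⟩

section Flow

variable {U s : Set ℝ} {r h : ℝ → ℝ}

theorem hasDerivAt_comp_of_flow (hU : IsOpen U) (hrU : ∀ x, r x ∈ U)
    (hr : ∀ x, HasDerivAt r (h (r x)) x) {F : ℝ → ℝ} (hF : DifferentiableOn ℝ F U) (x : ℝ) :
    HasDerivAt (F ∘ r) ((deriv F * h) (r x)) x :=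
  (hF.differentiableAt (hU.mem_nhds (hrU x))).hasDerivAt.comp x (hr x)

theorem exists_derivsBoundedBy_comp_of_flow (hU : IsOpen U) (hs : IsCompact s) (hsU : s ⊆ U)
    (hrs : ∀ x, r x ∈ s) (hr : ∀ x, HasDerivAt r (h (r x)) x) (hh : ContDiffOn ℝ 2 h U)
    {A : ℝ → ℝ} (hA : ContDiffOn ℝ 2 A U) :
    ∃ K > 0, DerivsBoundedBy ((h * A) ∘ r) (fun x => K * |h (r x)|) := by
  have hrU : ∀ x, r x ∈ U := fun x => hsU (hrs x)
  have hF : ContDiffOn ℝ 2 (h * A) U := hh.mul hA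
  have hD : ContDiffOn ℝ 1 (deriv (h * A) * h) U :=
    (hF.deriv_of_isOpen hU (by norm_num)).mul (hh.of_le (by norm_num))
  have hW := hasDerivAt_comp_of_flow hU hrU hr (hF.differentiableOn (by norm_num))
  have hW' : deriv ((h * A) ∘ r) = (deriv (h * A) * h) ∘ r := funext fun x => (hW x).deriv
  have hW'' := hasDerivAt_comp_of_flow hU hrU hr (hD.differentiableOn (by norm_num))
  obtain ⟨K₀, hK₀⟩ := hs.exists_bound_of_continuousOn (hA.continuousOn.mono hsU)
  obtain ⟨K₁, hK₁⟩ := hs.exists_bound_of_continuousOn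
    ((hF.continuousOn_deriv_of_isOpen hU (by norm_num)).mono hsU)
  obtain ⟨K₂, hK₂⟩ := hs.exists_bound_of_continuousOn
    ((hD.continuousOn_deriv_of_isOpen hU le_rfl).mono hsU)
  set K := max 1 (max K₀ (max K₁ K₂))
  have hbound : ∀ {Φ : ℝ → ℝ} {K' : ℝ}, (∀ y ∈ s, ‖Φ y‖ ≤ K') → K' ≤ K →
      ∀ x, |Φ (r x) * h (r x)| ≤ K * |h (r x)| := fun hΦ hK' x => by
    rw [abs_mul]
    exact mul_le_mul_of_nonneg_right ((hΦ _ (hrs x)).trans hK') (abs_nonneg _)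
  refine ⟨K, lt_max_of_lt_left one_pos, fun x => (hW x).differentiableAt, ?_, fun x => ?_⟩
  · rw [hW']; exact fun x => (hW'' x).differentiableAt
  · rw [hW', (hW'' x).deriv]
    refine ⟨?_, hbound hK₁ (by simp [K]) x, hbound hK₂ (by simp [K]) x⟩
    rw [Function.comp_apply, Pi.mul_apply, mul_comm]
    exact hbound hK₀ (by simp [K]) x

end Flow

theorem exists_eq_sub_mul_sub_mul_of_roots {M Q l rm rp : ℝ} {Δ : ℝ → ℝ} (hl : l ≠ 0)
    (hΔ : ∀ r, Δ r = r ^ 2 - 2 * M * r + r ^ 4 / l ^ 2 + Q ^ 2) (hΔm : Δ rm = 0) (hΔp : Δ rp = 0)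
    (hmp : rm ≠ rp) :
    ∃ g : ℝ → ℝ, ContDiff ℝ ⊤ g ∧ (∀ r, 0 < g r) ∧ ∀ r, Δ r = (r - rm) * (r - rp) * g r := by
  have hl2 : 0 < l ^ 2 := by positivity
  -- Vieta: the difference of the two root equations, divided by `rp - rm`
  have hvieta : (rp + rm) * (rp ^ 2 + rm ^ 2) + l ^ 2 * (rp + rm) = 2 * M * l ^ 2 := by
    have hm := hΔm; have hp := hΔp
    rw [hΔ] at hm hp
    field_simp at hm hp
    have hdiff : (rp - rm) * ((rp + rm) * (rp ^ 2 + rm ^ 2) + l ^ 2 * (rp + rm)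
        - 2 * M * l ^ 2) = 0 := by
      linear_combination hp - hm
    linarith [(mul_eq_zero.1 hdiff).resolve_left (sub_ne_zero.2 hmp.symm)]
  refine ⟨fun r => (r ^ 2 + (rm + rp) * r + rm ^ 2 + rm * rp + rp ^ 2 + l ^ 2) / l ^ 2,
    by fun_prop, fun r => div_pos ?_ hl2, fun r => ?_⟩
  · nlinarith [sq_nonneg (r + rm), sq_nonneg (r + rp), sq_nonneg (rm + rp)]
  have hm := hΔm
  rw [hΔ] at hm ⊢
  field_simp at hm ⊢
  linear_combination (r - rm) * hvieta + hm

theorem deriv_eq_of_eq_sub_mul_sub_mul {Δ g : ℝ → ℝ} {a b : ℝ}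
    (hΔ : ∀ r, Δ r = (r - a) * (r - b) * g r) (hg : Differentiable ℝ g) :
    deriv Δ a = (a - b) * g a ∧ deriv Δ b = (b - a) * g b := by
  have hderiv : ∀ c, HasDerivAt Δ ((c - b + (c - a)) * g c + (c - a) * (c - b) * deriv g c) c :=
    fun c => by
    rw [show Δ = fun r => (r - a) * (r - b) * g r from funext hΔ]
    refine ((((hasDerivAt_id' c).sub_const a).fun_mul ((hasDerivAt_id' c).sub_const b)).fun_mul
      (hg c).hasDerivAt).congr_deriv ?_
    ring
  constructor
  · rw [(hderiv a).deriv]; ring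
  · rw [(hderiv b).deriv]; ring

theorem exists_abs_comp_le_mul_exp {rm rp κp κm : ℝ} {Δ g h r : ℝ → ℝ} (hrm : 0 < rm)
    (hg : ContDiff ℝ ⊤ g) (hg_pos : ∀ s, 0 < g s) (hΔg : ∀ s, Δ s = (s - rm) * (s - rp) * g s)
    (hκp : κp = deriv Δ rp / (2 * rp ^ 2)) (hκm : κm = -deriv Δ rm / (2 * rm ^ 2))
    (hh : ∀ s, h s = Δ s / s ^ 2) (hr : ∀ x, r x ∈ Ioo rm rp)
    (hr' : ∀ x, HasDerivAt r (h (r x)) x) :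
    ∃ C > 0, ∀ x, |h (r x)| ≤ C * exp (-2 * min κp κm * |x|) := by
  have hIcc_pos : Icc rm rp ⊆ Ioi 0 := fun s hs => hrm.trans_le hs.1
  have hh_eq : ∀ s, h s = (s - rm) * (s - rp) * (g s / s ^ 2) := fun s => by
    rw [hh, hΔg, mul_div_assoc]
  obtain ⟨K, hK⟩ : ∃ K, LipschitzOnWith K (fun s => g s / s ^ 2) (Icc rm rp) :=
    (hg.contDiffOn.div (contDiffOn_id.pow 2) fun s hs =>
      pow_ne_zero 2 (hIcc_pos hs).ne').exists_lipschitzOnWith (n := ⊤) (by simp)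
      (convex_Icc rm rp) isCompact_Icc
  obtain ⟨C, hC, hdecay⟩ := exists_abs_le_mul_exp_of_hasDerivAt hK
    (fun s hs => div_pos (hg_pos s) (pow_pos (hIcc_pos hs) 2)) hr
    (fun x => by simpa only [hh_eq] using hr' x)
  obtain ⟨hDm, hDp⟩ := deriv_eq_of_eq_sub_mul_sub_mul hΔg (hg.differentiable (by simp))
  have hrate : 2 * min κp κm
      = min ((rp - rm) * (g rm / rm ^ 2)) ((rp - rm) * (g rp / rp ^ 2)) := by
    rw [mul_min_of_nonneg _ _ zero_le_two, min_comm, hκm, hκp, hDm, hDp]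
    congr 1 <;> ring
  refine ⟨C, hC, fun x => ?_⟩
  rw [show -2 * min κp κm * |x| = -(2 * min κp κm) * |x| by ring, hrate, hh_eq]
  exact hdecay x

theorem exists_derivsBoundedBy_potential {rm rp μ : ℝ} {h r : ℝ → ℝ} (hrm : 0 < rm)
    (hh : ContDiffOn ℝ ⊤ h (Ioi 0)) (hr : ∀ x, r x ∈ Icc rm rp)
    (hr' : ∀ x, HasDerivAt r (h (r x)) x) :
    ∃ K > 0, ∀ ℓ : ℕ, 1 ≤ ℓ → DerivsBoundedBy
      (fun x => h (r x) * (deriv h (r x) / r x + ℓ * (ℓ + 1) / r x ^ 2 - μ))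
      (fun x => K * ℓ ^ 2 * |h (r x)|) := by
  have hIcc_pos : Icc rm rp ⊆ Ioi 0 := fun s hs => hrm.trans_le hs.1
  obtain ⟨K₀, hK₀, hW₀⟩ := exists_derivsBoundedBy_comp_of_flow isOpen_Ioi isCompact_Icc hIcc_pos
    hr hr' (hh.of_le le_top) (A := fun s => deriv h s / s - μ)
    (((hh.deriv_of_isOpen isOpen_Ioi le_top).div contDiffOn_id fun s hs => ne_of_gt hs).sub
      contDiffOn_const)
  obtain ⟨K₁, hK₁, hW₁⟩ := exists_derivsBoundedBy_comp_of_flow isOpen_Ioi isCompact_Icc hIcc_pos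
    hr hr' (hh.of_le le_top) (A := fun s => (s ^ 2)⁻¹)
    ((contDiffOn_id.pow 2).inv fun s hs => pow_ne_zero 2 (ne_of_gt hs))
  refine ⟨K₀ + 2 * K₁, by positivity, fun ℓ hℓ => ?_⟩
  have hsplit : (fun x => h (r x) * (deriv h (r x) / r x + ℓ * (ℓ + 1) / r x ^ 2 - μ))
      = fun x => ((h * fun s => deriv h s / s - μ) ∘ r) x
        + (ℓ * (ℓ + 1) : ℝ) * ((h * fun s => (s ^ 2)⁻¹) ∘ r) x := funext fun x => by
    simp only [Function.comp, Pi.mul_apply]; ring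
  have hcoef : K₀ + ℓ * (ℓ + 1) * K₁ ≤ (K₀ + 2 * K₁) * ℓ ^ 2 := by
    have hℓ' : (1 : ℝ) ≤ ℓ := by exact_mod_cast hℓ
    nlinarith [mul_le_mul_of_nonneg_left (show (ℓ * (ℓ + 1) : ℝ) ≤ 2 * ℓ ^ 2 by nlinarith) hK₁.le,
      mul_le_mul_of_nonneg_left (show (1 : ℝ) ≤ ℓ ^ 2 by nlinarith) hK₀.le]
  rw [hsplit]
  refine (hW₀.add_const_mul hW₁ (by positivity)).mono fun x => ?_
  calc K₀ * |h (r x)| + ℓ * (ℓ + 1) * (K₁ * |h (r x)|)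
      = (K₀ + ℓ * (ℓ + 1) * K₁) * |h (r x)| := by ring
    _ ≤ (K₀ + 2 * K₁) * ℓ ^ 2 * |h (r x)| := by gcongr

theorem stmt_5_general (M Q l α : ℝ) (hl : 0 < l)
    (Δ : ℝ → ℝ) (hΔ : ∀ r, Δ r = r ^ 2 - 2 * M * r + r ^ 4 / l ^ 2 + Q ^ 2)
    (rm rp : ℝ) (hrm : 0 < rm) (hmp : rm < rp)
    (hΔm : Δ rm = 0) (hΔp : Δ rp = 0)
    (κp κm : ℝ) (hκp : κp = deriv Δ rp / (2 * rp ^ 2)) (hκm : κm = -deriv Δ rm / (2 * rm ^ 2))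
    (rstar : ℝ → ℝ) (hrstar : ∀ r ∈ Ioo rm rp, HasDerivAt rstar (r ^ 2 / Δ r) r)
    (rfun : ℝ → ℝ) (hrfun_mem : ∀ x : ℝ, rfun x ∈ Ioo rm rp)
    (hrfun_inv : ∀ x : ℝ, rstar (rfun x) = x)
    (hrfun_inv' : ∀ r ∈ Ioo rm rp, rfun (rstar r) = r)
    (h : ℝ → ℝ) (hh : ∀ r, h r = Δ r / r ^ 2)
    (V : ℕ → ℝ → ℝ)
    (hV : ∀ (ℓ : ℕ) (x : ℝ), V ℓ x =
      h (rfun x) * (deriv h (rfun x) / rfun x + (ℓ : ℝ) * ((ℓ : ℝ) + 1) / (rfun x) ^ 2 - α / l ^ 2)) :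
    ∃ C > 0, ∀ ℓ : ℕ, 1 ≤ ℓ → ∀ x : ℝ,
      |V ℓ x| ≤ C * (ℓ : ℝ) ^ 2 * Real.exp (-2 * min κp κm * |x|) ∧
      |deriv (V ℓ) x| ≤ C * (ℓ : ℝ) ^ 2 * Real.exp (-2 * min κp κm * |x|) ∧
      |deriv (deriv (V ℓ)) x| ≤ C * (ℓ : ℝ) ^ 2 * Real.exp (-2 * min κp κm * |x|) := by
  obtain ⟨g, hg, hg_pos, hΔg⟩ := exists_eq_sub_mul_sub_mul_of_roots hl.ne' hΔ hΔm hΔp hmp.ne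
  have hrfun' : ∀ x, HasDerivAt rfun (h (rfun x)) x := fun x => by
    refine (hasDerivAt_of_leftInverse_of_neg hrstar (fun r hr => div_neg_of_pos_of_neg
      (by nlinarith [hr.1]) ?_) hrfun_mem hrfun_inv hrfun_inv' x).congr_deriv (by rw [hh, inv_div])
    rw [hΔg]
    exact mul_neg_of_neg_of_pos (mul_neg_of_pos_of_neg (sub_pos.2 hr.1) (sub_neg.2 hr.2)) (hg_pos r)
  obtain ⟨C₀, hC₀, hdecay⟩ :=
    exists_abs_comp_le_mul_exp hrm hg hg_pos hΔg hκp hκm hh hrfun_mem hrfun'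
  have hh_smooth : ContDiffOn ℝ ⊤ h (Ioi 0) := by
    rw [show h = fun r => Δ r / r ^ 2 from funext hh, show Δ = _ from funext hΔ]
    exact ContDiffOn.div (by fun_prop) (by fun_prop) fun r hr => pow_ne_zero 2 (ne_of_gt hr)
  obtain ⟨K, hK, hV_bound⟩ := exists_derivsBoundedBy_potential (μ := α / l ^ 2) hrm hh_smooth
    (fun x => Ioo_subset_Icc_self (hrfun_mem x)) hrfun'
  refine ⟨C₀ * K, by positivity, fun ℓ hℓ x => ?_⟩
  rw [show V ℓ = _ from funext (hV ℓ)]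
  refine ((hV_bound ℓ hℓ).mono (B' := fun y => C₀ * K * ℓ ^ 2 * exp (-2 * min κp κm * |y|))
    fun y => ?_).2.2 x
  calc K * ℓ ^ 2 * |h (rfun y)| ≤ K * ℓ ^ 2 * (C₀ * exp (-2 * min κp κm * |y|)) := by
        gcongr; exact hdecay y
    _ = C₀ * K * ℓ ^ 2 * exp (-2 * min κp κm * |y|) := by ring

/-- exponential decay bounds, uniform in ℓ, for the interior potential
V_ℓ and its first two derivatives in the tortoise coordinate. -/
theorem stmt_5 (M Q l α : ℝ) (hM : 0 < M) (hQ : Q ≠ 0) (hl : 0 < l) (hα : α < 9 / 4)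
    (Δ : ℝ → ℝ) (hΔ : ∀ r, Δ r = r ^ 2 - 2 * M * r + r ^ 4 / l ^ 2 + Q ^ 2)
    (rm rp : ℝ) (hrm : 0 < rm) (hmp : rm < rp)
    (hΔm : Δ rm = 0) (hΔp : Δ rp = 0)
    (honly : ∀ r, 0 < r → Δ r = 0 → r = rm ∨ r = rp)
    (κp κm : ℝ) (hκp : κp = deriv Δ rp / (2 * rp ^ 2)) (hκm : κm = -deriv Δ rm / (2 * rm ^ 2))
    (hκp_pos : 0 < κp) (hκm_pos : 0 < κm)
    (rstar : ℝ → ℝ) (hrstar : ∀ r ∈ Ioo rm rp, HasDerivAt rstar (r ^ 2 / Δ r) r)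
    (rfun : ℝ → ℝ) (hrfun_mem : ∀ x : ℝ, rfun x ∈ Ioo rm rp)
    (hrfun_inv : ∀ x : ℝ, rstar (rfun x) = x)
    (hrfun_inv' : ∀ r ∈ Ioo rm rp, rfun (rstar r) = r)
    (h : ℝ → ℝ) (hh : ∀ r, h r = Δ r / r ^ 2)
    (V : ℕ → ℝ → ℝ)
    (hV : ∀ (ℓ : ℕ) (x : ℝ), V ℓ x =
      h (rfun x) * (deriv h (rfun x) / rfun x + (ℓ : ℝ) * ((ℓ : ℝ) + 1) / (rfun x) ^ 2 - α / l ^ 2)) :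
    ∃ C > 0, ∀ ℓ : ℕ, 1 ≤ ℓ → ∀ x : ℝ,
      |V ℓ x| ≤ C * (ℓ : ℝ) ^ 2 * Real.exp (-2 * min κp κm * |x|) ∧
      |deriv (V ℓ) x| ≤ C * (ℓ : ℝ) ^ 2 * Real.exp (-2 * min κp κm * |x|) ∧
      |deriv (deriv (V ℓ)) x| ≤ C * (ℓ : ℝ) ^ 2 * Real.exp (-2 * min κp κm * |x|) :=
  stmt_5_general M Q l α hl Δ hΔ rm rp hrm hmp hΔm hΔp κp κm hκp hκm rstar hrstar rfun hrfun_mem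
    hrfun_inv hrfun_inv' h hh V hV
end

section
/- Let κ, c₁, c₂ > 0. There exist C > 0 and L₀ ≥ 1 (depending only on κ, c₁, c₂) with the following property. For every integer ℓ ≥ L₀, every interval [a, b] ⊂ ℝ, and every twice continuously differentiable function f : [a, b] → ℂ such that f(x) ∉ (−∞, 0] for all x, |f(x)| ≥ c₁ ℓ² for all x, and |f′(x)| ≤ c₂ ℓ² e^{−2κ|x|} and |f″(x)| ≤ c₂ ℓ² e^{−2κ|x|} for all x ∈ [a, b], one has ∫_{a}^{b} | f(x)^{−1/4} · (d²/dx²)( f(x)^{−1/4} ) | dx ≤ C/ℓ, where z^{−1/4} denotes the principal branch of the complex power. -/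
/-! Writing `g = f ^ (-1/4)`, the chain rule gives
`g g'' = -(1/4) f^(-1/2) (-(5/4) (f'/f)² + f''/f)`.
The lower bound `|f| ≥ c₁ ℓ²` yields `|f|^(-1/2) ≤ c₁^(-1/2) / ℓ`, which is where the gain `1/ℓ`
comes from; combined with the derivative bounds it also gives `|f'/f|, |f''/f| ≤ (c₂/c₁) e^(-2κ|x|)`.
So the integrand is at most `M/ℓ · e^(-2κ|x|)` with `M` depending only on `c₁, c₂`,
and the integral of that over all of `ℝ` is `M/(κℓ)`. -/

open Set MeasureTheory

theorem integrable_exp_mul_abs {a : ℝ} (ha : a < 0) :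
    Integrable fun x : ℝ => Real.exp (a * |x|) := by
  rw [← integrableOn_univ, ← Iic_union_Ioi (a := (0 : ℝ))]
  refine IntegrableOn.union ?_ ?_
  · refine (integrableOn_exp_mul_Iic (neg_pos.2 ha) 0).congr_fun (fun x hx => ?_)
      measurableSet_Iic
    simp only [abs_of_nonpos (mem_Iic.1 hx), neg_mul, mul_neg]
  · exact (integrableOn_exp_mul_Ioi ha 0).congr_fun (fun x hx => by rw [abs_of_pos hx])
      measurableSet_Ioi

theorem integral_exp_mul_abs {a : ℝ} (ha : a < 0) :
    ∫ x : ℝ, Real.exp (a * |x|) = -2 / a := by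
  rw [integral_comp_abs (f := fun x => Real.exp (a * x)), integral_exp_mul_Ioi ha 0,
    mul_zero, Real.exp_zero]
  ring

theorem derivWithin_derivWithin_cpow_const {s : Set ℝ} {f : ℝ → ℂ} (hs : UniqueDiffOn ℝ s)
    (hf : ContDiffOn ℝ 2 f s) (hslit : MapsTo f s Complex.slitPlane) (p : ℂ) {x : ℝ}
    (hx : x ∈ s) :
    derivWithin (derivWithin (fun y => f y ^ p) s) s x =
      p * ((p - 1) * f x ^ (p - 1 - 1) * derivWithin f s x * derivWithin f s x +
        f x ^ (p - 1) * derivWithin (derivWithin f s) s x) := by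
  have hf' : ∀ y ∈ s, HasDerivWithinAt f (derivWithin f s y) s y := fun y hy =>
    (hf.differentiableOn two_ne_zero y hy).hasDerivWithinAt
  have hf'' : HasDerivWithinAt (derivWithin f s) (derivWithin (derivWithin f s) s x) s x :=
    ((hf.derivWithin hs one_add_one_eq_two.le).differentiableOn one_ne_zero x
      hx).hasDerivWithinAt
  have hcpow : ∀ q : ℂ, ∀ y ∈ s,
      HasDerivWithinAt (fun y => f y ^ q) (q * f y ^ (q - 1) * derivWithin f s y) s y :=
    fun q y hy =>
      (Complex.hasStrictDerivAt_cpow_const (hslit hy)).hasDerivAt.comp_hasDerivWithinAt y (hf' y hy)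
  have hfirst : EqOn (derivWithin (fun y => f y ^ p) s)
      (fun y => p * f y ^ (p - 1) * derivWithin f s y) s := fun y hy =>
    (hcpow p y hy).derivWithin (hs y hy)
  have hsecond := ((hcpow (p - 1) x hx).mul hf'').const_mul p
  simp only [mul_assoc] at hsecond hfirst ⊢
  exact (hsecond.congr hfirst (hfirst hx)).derivWithin (hs x hx)

theorem cpow_mul_derivWithin_derivWithin_cpow_const {s : Set ℝ} {f : ℝ → ℂ}
    (hs : UniqueDiffOn ℝ s) (hf : ContDiffOn ℝ 2 f s) (hslit : MapsTo f s Complex.slitPlane)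
    (p : ℂ) {x : ℝ} (hx : x ∈ s) :
    f x ^ p * derivWithin (derivWithin (fun y => f y ^ p) s) s x =
      p * f x ^ (2 * p) * ((p - 1) * (derivWithin f s x / f x) ^ 2 +
        derivWithin (derivWithin f s) s x / f x) := by
  have hfx := Complex.slitPlane_ne_zero (hslit hx)
  rw [derivWithin_derivWithin_cpow_const hs hf hslit p hx, Complex.cpow_sub _ _ hfx,
    Complex.cpow_sub _ _ hfx, Complex.cpow_one, two_mul, Complex.cpow_add _ _ hfx]
  field_simp

theorem norm_cpow_neg_one_half (z : ℂ) : ‖z ^ (-(1 / 2) : ℂ)‖ = (√‖z‖)⁻¹ := by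
  rw [show (-(1 / 2) : ℂ) = ((-(1 / 2) : ℝ) : ℂ) by push_cast; rfl, Complex.norm_cpow_real,
    Real.rpow_neg (norm_nonneg z), Real.sqrt_eq_rpow]

theorem norm_wkb_integrand_le {z w v : ℂ} {c₁ c₂ ℓ E : ℝ} (hc₁ : 0 < c₁) (hℓ : 0 < ℓ)
    (hE₀ : 0 ≤ E) (hE₁ : E ≤ 1) (hz : c₁ * ℓ ^ 2 ≤ ‖z‖) (hw : ‖w‖ ≤ c₂ * ℓ ^ 2 * E)
    (hv : ‖v‖ ≤ c₂ * ℓ ^ 2 * E) :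
    ‖(-(1 / 4) : ℂ) * z ^ (2 * (-(1 / 4) : ℂ)) *
        (((-(1 / 4) : ℂ) - 1) * (w / z) ^ 2 + v / z)‖ ≤
      (√c₁)⁻¹ * (5 / 4 * (c₂ / c₁) ^ 2 + c₂ / c₁) / 4 / ℓ * E := by
  have hz₀ : 0 < ‖z‖ := (by positivity : 0 < c₁ * ℓ ^ 2).trans_le hz
  have hratio : ∀ u : ℂ, ‖u‖ ≤ c₂ * ℓ ^ 2 * E → ‖u / z‖ ≤ c₂ / c₁ * E := fun u hu => calc
    ‖u / z‖ ≤ c₂ * ℓ ^ 2 * E / (c₁ * ℓ ^ 2) := by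
      rw [norm_div]; exact div_le_div₀ ((norm_nonneg u).trans hu) hu (by positivity) hz
    _ = c₂ / c₁ * E := by field_simp
  have hsqrt : (√‖z‖)⁻¹ ≤ (√c₁)⁻¹ / ℓ := calc
    (√‖z‖)⁻¹ ≤ (√(c₁ * ℓ ^ 2))⁻¹ := by gcongr
    _ = (√c₁)⁻¹ / ℓ := by rw [Real.sqrt_mul hc₁.le, Real.sqrt_sq hℓ.le, mul_inv, div_eq_mul_inv]
  have hbracket : ‖((-(1 / 4) : ℂ) - 1) * (w / z) ^ 2 + v / z‖ ≤
      (5 / 4 * (c₂ / c₁) ^ 2 + c₂ / c₁) * E := calc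
    _ ≤ 5 / 4 * ‖w / z‖ ^ 2 + ‖v / z‖ := by
      refine (norm_add_le _ _).trans_eq ?_
      rw [norm_mul, norm_pow]
      norm_num
    _ ≤ 5 / 4 * (c₂ / c₁ * E) ^ 2 + c₂ / c₁ * E := by gcongr <;> apply hratio <;> assumption
    _ ≤ (5 / 4 * (c₂ / c₁) ^ 2 + c₂ / c₁) * E := by
      have : E ^ 2 ≤ E := by nlinarith
      nlinarith [sq_nonneg (c₂ / c₁)]
  have hquarter : ‖(-(1 / 4) : ℂ)‖ = 1 / 4 := by norm_num
  rw [norm_mul, norm_mul, hquarter, show 2 * (-(1 / 4) : ℂ) = -(1 / 2) by norm_num,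
    norm_cpow_neg_one_half]
  calc _ ≤ 1 / 4 * ((√c₁)⁻¹ / ℓ) * ((5 / 4 * (c₂ / c₁) ^ 2 + c₂ / c₁) * E) := by
        gcongr
    _ = _ := by ring

/-- the WKB (Liouville–Green) error-control integral
∫_a^b |f^{−1/4} (f^{−1/4})″| dx is O(1/ℓ) for complex potentials f avoiding (−∞, 0]
with |f| ≳ ℓ² and exponentially decaying first and second derivatives. -/
theorem stmt_9 (κ c₁ c₂ : ℝ) (hκ : 0 < κ) (hc₁ : 0 < c₁) (hc₂ : 0 < c₂) :
    ∃ C > 0, ∃ L₀ : ℕ, 1 ≤ L₀ ∧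
      ∀ ℓ : ℕ, L₀ ≤ ℓ → ∀ a b : ℝ, a ≤ b → ∀ f : ℝ → ℂ,
        ContDiffOn ℝ 2 f (Icc a b) →
        (∀ x ∈ Icc a b, ¬((f x).im = 0 ∧ (f x).re ≤ 0)) →
        (∀ x ∈ Icc a b, c₁ * (ℓ : ℝ) ^ 2 ≤ ‖f x‖) →
        (∀ x ∈ Icc a b, ‖derivWithin f (Icc a b) x‖ ≤ c₂ * (ℓ : ℝ) ^ 2 * Real.exp (-2 * κ * |x|)) →
        (∀ x ∈ Icc a b, ‖derivWithin (derivWithin f (Icc a b)) (Icc a b) x‖ ≤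
          c₂ * (ℓ : ℝ) ^ 2 * Real.exp (-2 * κ * |x|)) →
        (∫ x in a..b, ‖f x ^ (-(1 / 4) : ℂ) *
            derivWithin (derivWithin (fun y : ℝ => f y ^ (-(1 / 4) : ℂ)) (Icc a b)) (Icc a b) x‖)
          ≤ C / (ℓ : ℝ) := by
  set M := (√c₁)⁻¹ * (5 / 4 * (c₂ / c₁) ^ 2 + c₂ / c₁) / 4
  refine ⟨M / κ, by positivity, 1, le_rfl, fun ℓ hℓ a b hab f hf hslit hlow hd₁ hd₂ => ?_⟩
  have hℓ₀ : (0 : ℝ) < ℓ := Nat.cast_pos.2 hℓ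
  have hslit' : MapsTo f (Icc a b) Complex.slitPlane := fun x hx =>
    Complex.mem_slitPlane_iff.2 (by by_contra! h; exact hslit x hx ⟨h.2, h.1⟩)
  have hexp := integrable_exp_mul_abs (a := -2 * κ) (by linarith)
  have hpointwise : ∀ x ∈ Ioc a b, ‖f x ^ (-(1 / 4) : ℂ) *
      derivWithin (derivWithin (fun y : ℝ => f y ^ (-(1 / 4) : ℂ)) (Icc a b)) (Icc a b) x‖ ≤
        M / ℓ * Real.exp (-2 * κ * |x|) := fun x hx => by
    have hx' := Ioc_subset_Icc_self hx
    rw [cpow_mul_derivWithin_derivWithin_cpow_const (uniqueDiffOn_Icc (hx.1.trans_le hx.2)) hf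
      hslit' _ hx']
    exact norm_wkb_integrand_le hc₁ hℓ₀ (Real.exp_nonneg _)
      (Real.exp_le_one_iff.2 (mul_nonpos_of_nonpos_of_nonneg (by linarith) (abs_nonneg x)))
      (hlow x hx') (hd₁ x hx') (hd₂ x hx')
  calc _ ≤ ∫ x in Ioc a b, M / ℓ * Real.exp (-2 * κ * |x|) := by
        rw [intervalIntegral.integral_of_le hab]
        -- only the dominating function has to be integrable
        exact integral_mono_of_nonneg (ae_of_all _ fun _ => norm_nonneg _)
          (hexp.const_mul _).integrableOn
          ((ae_restrict_iff' measurableSet_Ioc).2 (ae_of_all _ hpointwise))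
    _ ≤ ∫ x, M / ℓ * Real.exp (-2 * κ * |x|) :=
        setIntegral_le_integral (hexp.const_mul _) (ae_of_all _ fun _ => by positivity)
    _ = M / κ / ℓ := by
        rw [integral_const_mul, integral_exp_mul_abs (by linarith)]
        field_simp
end

section
/- Let κ, A, c₁, c₂, c_I > 0. There exist constants C > 0, c̃ > 0 and L₀ ≥ 1 (depending only on κ, A, c₁, c₂, c_I) with the following property. Let ℓ ≥ L₀ be an integer, let V : ℝ → ℝ be continuous with |V(x)| ≤ A ℓ² e^{−2κ|x|} for all x, let ω ∈ ℂ satisfy c₁ℓ ≤ Re(ω) ≤ c₂ℓ and 0 < −Im(ω) ≤ e^{−c_I ℓ}, and set R₂ := −1/Im(ω) > 0. Let u₊ be the unique solution of the Volterra equation u₊(x) = e^{iωx} − ∫_{x}^{∞} (sin(ω(x−y))/ω) V(y) u₊(y) dy with sup_{x ≥ 0}|e^{−iωx}u₊(x)| < ∞. Then sup_{x ≥ R₂} ( |e^{−iωx}u₊(x) − 1| + |e^{−iωx}(u₊′(x) − iω u₊(x))| ) ≤ C e^{−c̃ ℓ}. -/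
open MeasureTheory Filter Complex Set

/-!
Writing the sine kernel through exponentials gives
`u(x) = e^{iωx} - (e^{iωx} T_{-ω}(x) - e^{-iωx} T_ω(x)) / (2iω)` with the tails
`T_s(x) = ∫_x^∞ e^{isy} V(y) u(y) dy`, and differentiating this gives `u' - iωu = -e^{-iωx} T_ω(x)`.
If `|e^{-iωy} u(y)| ≤ M` on `[x, ∞)`, then `|V| ≤ Aℓ² e^{-2κy}` and `-Im ω ≤ κ/2` make both tails
`O(Aℓ² M e^{-κx} / κ)`. On `[R₂, ∞)` this gives `M ≤ 1 + M/2` once `Aℓ² e^{-κR₂} / (κ|ω|) ≤ 1/2`,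
so `M ≤ 2`; and as `R₂ ≥ e^{c_I ℓ} ≥ c_I ℓ`, the two errors are
`O(ℓ² e^{-κ c_I ℓ}) = O(e^{-κ c_I ℓ / 2})`.
-/

theorem integrableOn_Ici_of_norm_le_exp {E : Type*} [NormedAddCommGroup E] {f : ℝ → E}
    {x c b : ℝ} (hb : 0 < b)
    (hf : AEStronglyMeasurable f (volume.restrict (Ici x)))
    (hbd : ∀ y ∈ Ici x, ‖f y‖ ≤ c * Real.exp (-b * y)) : IntegrableOn f (Ici x) := by
  refine Integrable.mono' ?_ hf (ae_restrict_of_forall_mem measurableSet_Ici hbd)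
  exact ((integrableOn_Ici_iff_integrableOn_Ioi).mpr
    (integrableOn_exp_mul_Ioi (neg_lt_zero.2 hb) x)).const_mul c

theorem norm_setIntegral_Ici_le_of_norm_le_exp {E : Type*} [NormedAddCommGroup E]
    [NormedSpace ℝ E] {f : ℝ → E} {x c b : ℝ} (hb : 0 < b)
    (hbd : ∀ y ∈ Ici x, ‖f y‖ ≤ c * Real.exp (-b * y)) :
    ‖∫ y in Ici x, f y‖ ≤ c * Real.exp (-b * x) / b := by
  have hexp := integrableOn_exp_mul_Ioi (neg_lt_zero.2 hb) x
  refine (norm_integral_le_of_norm_le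
    (((integrableOn_Ici_iff_integrableOn_Ioi).mpr hexp).const_mul c)
    (ae_restrict_of_forall_mem measurableSet_Ici hbd)).trans_eq ?_
  rw [integral_const_mul, integral_Ici_eq_integral_Ioi, integral_exp_mul_Ioi (neg_lt_zero.2 hb)]
  field_simp

theorem hasDerivAt_setIntegral_Ici {E : Type*} [NormedAddCommGroup E] [NormedSpace ℝ E]
    [CompleteSpace E] {f : ℝ → E} {a x : ℝ} (hf : Continuous f)
    (hint : IntegrableOn f (Ici a)) (hax : a < x) :
    HasDerivAt (fun t => ∫ y in Ici t, f y) (-f x) x := by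
  have hFTC : HasDerivAt (fun t => (∫ y in Ici a, f y) - ∫ y in a..t, f y) (-f x) x :=
    (intervalIntegral.integral_hasDerivAt_right (hf.intervalIntegrable a x)
      (hf.stronglyMeasurableAtFilter volume _) hf.continuousAt).const_sub _
  refine hFTC.congr_of_eventuallyEq ?_
  filter_upwards [Ioi_mem_nhds hax] with t ht
  rw [← intervalIntegral.integral_Ici_sub_Ici' hint (hint.mono_set (Ici_subset_Ici.2 ht.le)),
    sub_sub_cancel]

theorem norm_cexp_I_mul_ofReal (s : ℂ) (y : ℝ) :
    ‖cexp (I * s * y)‖ = Real.exp (-s.im * y) := by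
  simp [Complex.norm_exp]

theorem hasDerivAt_cexp_mul_ofReal (c : ℂ) (x : ℝ) :
    HasDerivAt (fun t : ℝ => cexp (c * t)) (c * cexp (c * x)) x := by
  simpa [mul_comm] using ((hasDerivAt_id x).ofReal_comp.const_mul c).cexp

noncomputable def expTail (ω : ℂ) (g : ℝ → ℂ) (t : ℝ) : ℂ := ∫ y in Ici t, cexp (I * ω * y) * g y

theorem integral_sin_kernel_eq_expTail {ω : ℂ} (hω : ω ≠ 0) {g : ℝ → ℂ} {t : ℝ}
    (hpos : IntegrableOn (fun y : ℝ => cexp (I * ω * y) * g y) (Ici t))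
    (hneg : IntegrableOn (fun y : ℝ => cexp (I * -ω * y) * g y) (Ici t)) :
    ∫ y in Ici t, Complex.sin (ω * (t - y)) / ω * g y =
      (cexp (I * ω * t) * expTail (-ω) g t - cexp (-(I * ω * t)) * expTail ω g t) /
        (2 * I * ω) := by
  have hsin (y : ℝ) : Complex.sin (ω * (t - y)) / ω * g y =
      cexp (I * ω * t) / (2 * I * ω) * (cexp (I * -ω * y) * g y) -
        cexp (-(I * ω * t)) / (2 * I * ω) * (cexp (I * ω * y) * g y) := by
    rw [Complex.sin, show -(ω * (t - y)) * I = -(I * ω * t) + I * ω * y by ring,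
      show ω * (t - y) * I = I * ω * t + I * -ω * y by ring, Complex.exp_add, Complex.exp_add]
    field_simp
    rw [I_sq]
    ring
  simp_rw [hsin]
  rw [integral_sub (hneg.const_mul _) (hpos.const_mul _), integral_const_mul,
    integral_const_mul, expTail, expTail]
  ring

theorem hasDerivAt_expTail {ω : ℂ} {g : ℝ → ℂ} {a x : ℝ} (hg : Continuous g)
    (hint : IntegrableOn (fun y : ℝ => cexp (I * ω * y) * g y) (Ici a)) (hax : a < x) :
    HasDerivAt (expTail ω g) (-(cexp (I * ω * x) * g x)) x :=
  hasDerivAt_setIntegral_Ici (by fun_prop) hint hax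

theorem deriv_sub_mul_eq_of_volterra {ω : ℂ} (hω : ω ≠ 0) {g u : ℝ → ℂ} {a x : ℝ}
    (hg : Continuous g)
    (hpos : IntegrableOn (fun y : ℝ => cexp (I * ω * y) * g y) (Ici a))
    (hneg : IntegrableOn (fun y : ℝ => cexp (I * -ω * y) * g y) (Ici a)) (hax : a < x)
    (hu : ∀ t, a < t → u t = cexp (I * ω * t) - ∫ y in Ici t, Complex.sin (ω * (t - y)) / ω * g y) :
    deriv u x - I * ω * u x = -(cexp (-(I * ω * x)) * expTail ω g x) := by
  have hrepr : ∀ t, a < t → u t = cexp (I * ω * t) -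
      (cexp (I * ω * t) * expTail (-ω) g t - cexp (-(I * ω * t)) * expTail ω g t) /
        (2 * I * ω) := fun t ht => by
    rw [hu t ht, integral_sin_kernel_eq_expTail hω (hpos.mono_set (Ici_subset_Ici.2 ht.le))
      (hneg.mono_set (Ici_subset_Ici.2 ht.le))]
  have hexp := hasDerivAt_cexp_mul_ofReal (I * ω) x
  have hexp_neg := hasDerivAt_cexp_mul_ofReal (-(I * ω)) x
  simp only [neg_mul] at hexp_neg
  have hderiv := hexp.sub (((hexp.mul (hasDerivAt_expTail hg hneg hax)).sub
    (hexp_neg.mul (hasDerivAt_expTail hg hpos hax))).div_const (2 * I * ω))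
  rw [(hderiv.congr_of_eventuallyEq _).deriv, hrepr x hax]
  · rw [show I * -ω * x = -(I * ω * x) by ring]
    field_simp
    ring
  · filter_upwards [Ioi_mem_nhds hax] with t ht using hrepr t ht

theorem le_div_one_sub_of_bootstrap {α : Type*} {f : α → ℝ} {s : Set α} {c q : ℝ} (hq : q < 1)
    (hbdd : BddAbove (f '' s)) (hstep : ∀ M, (∀ a ∈ s, f a ≤ M) → ∀ a ∈ s, f a ≤ c + q * M) :
    ∀ a ∈ s, f a ≤ c / (1 - q) := by
  intro a ha
  have hsup : ∀ b ∈ s, f b ≤ sSup (f '' s) := fun b hb => le_csSup hbdd (mem_image_of_mem f hb)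
  have hfix : sSup (f '' s) ≤ c + q * sSup (f '' s) :=
    csSup_le ⟨f a, mem_image_of_mem f ha⟩ (by rintro _ ⟨b, hb, rfl⟩; exact hstep _ hsup b hb)
  rw [le_div_iff₀ (by linarith)]
  nlinarith [hsup a ha]

section Volterra

variable {ω s : ℂ} {V : ℝ → ℝ} {u : ℝ → ℂ} {κ K M x : ℝ}

theorem norm_cexp_neg_I_mul_le_one (hωim : ω.im ≤ 0) (hx : 0 ≤ x) :
    ‖cexp (-(I * ω * x))‖ ≤ 1 := by
  rw [Complex.norm_exp]
  simpa using mul_nonpos_of_nonpos_of_nonneg hωim hx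

theorem norm_cexp_mul_potential_mul_le {y : ℝ} (hs : ω.im ≤ s.im) (hωκ : -ω.im ≤ κ / 2)
    (hy : 0 ≤ y) (hV : |V y| ≤ K * Real.exp (-2 * κ * y))
    (hu : ‖cexp (-(I * ω * y)) * u y‖ ≤ M) :
    ‖cexp (I * s * y) * (V y * u y)‖ ≤ K * M * Real.exp (-κ * y) := by
  have hK : 0 ≤ K := nonneg_of_mul_nonneg_left ((abs_nonneg _).trans hV) (Real.exp_pos _)
  have hM : 0 ≤ M := (norm_nonneg _).trans hu
  have hu' : ‖u y‖ ≤ Real.exp (-ω.im * y) * M := by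
    have hfactor : u y = cexp (I * ω * y) * (cexp (-(I * ω * y)) * u y) := by
      rw [← mul_assoc, ← Complex.exp_add, add_neg_cancel, Complex.exp_zero, one_mul]
    rw [hfactor, norm_mul, norm_cexp_I_mul_ofReal]
    gcongr
  have hexp : Real.exp (-s.im * y) * Real.exp (-2 * κ * y) * Real.exp (-ω.im * y) ≤
      Real.exp (-κ * y) := by
    rw [← Real.exp_add, ← Real.exp_add]
    gcongr
    nlinarith [mul_nonneg (sub_nonneg.2 hs) hy]
  rw [norm_mul, norm_mul, norm_cexp_I_mul_ofReal, Complex.norm_real, Real.norm_eq_abs]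
  calc Real.exp (-s.im * y) * (|V y| * ‖u y‖)
      ≤ Real.exp (-s.im * y) * (K * Real.exp (-2 * κ * y) * (Real.exp (-ω.im * y) * M)) := by
        gcongr
    _ = K * M * (Real.exp (-s.im * y) * Real.exp (-2 * κ * y) * Real.exp (-ω.im * y)) := by ring
    _ ≤ K * M * Real.exp (-κ * y) := by gcongr

theorem integrableOn_cexp_mul_potential_mul (hκ : 0 < κ) (hs : ω.im ≤ s.im)
    (hωκ : -ω.im ≤ κ / 2) (hV : Continuous V) (hu : Continuous u)
    (hVbd : ∀ y, 0 ≤ y → |V y| ≤ K * Real.exp (-2 * κ * y)) (hx : 0 ≤ x)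
    (hM : ∀ y, x ≤ y → ‖cexp (-(I * ω * y)) * u y‖ ≤ M) :
    IntegrableOn (fun y : ℝ => cexp (I * s * y) * (V y * u y)) (Ici x) :=
  integrableOn_Ici_of_norm_le_exp hκ (by fun_prop : Continuous _).aestronglyMeasurable
    fun y hy => norm_cexp_mul_potential_mul_le hs hωκ (hx.trans hy) (hVbd y (hx.trans hy)) (hM y hy)

theorem norm_expTail_potential_mul_le (hκ : 0 < κ) (hs : ω.im ≤ s.im) (hωκ : -ω.im ≤ κ / 2)
    (hVbd : ∀ y, 0 ≤ y → |V y| ≤ K * Real.exp (-2 * κ * y)) (hx : 0 ≤ x)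
    (hM : ∀ y, x ≤ y → ‖cexp (-(I * ω * y)) * u y‖ ≤ M) :
    ‖expTail s (fun y => V y * u y) x‖ ≤ K * M * Real.exp (-κ * x) / κ :=
  norm_setIntegral_Ici_le_of_norm_le_exp hκ
    fun y hy => norm_cexp_mul_potential_mul_le hs hωκ (hx.trans hy) (hVbd y (hx.trans hy)) (hM y hy)

theorem norm_cexp_neg_mul_sub_one_le (hω : ω ≠ 0) (hκ : 0 < κ) (hωim : ω.im ≤ 0)
    (hωκ : -ω.im ≤ κ / 2) (hV : Continuous V) (hu : Continuous u)
    (hVbd : ∀ y, 0 ≤ y → |V y| ≤ K * Real.exp (-2 * κ * y))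
    (hVolt : u x = cexp (I * ω * x) - ∫ y in Ici x, Complex.sin (ω * (x - y)) / ω * V y * u y)
    (hx : 0 ≤ x) (hM : ∀ y, x ≤ y → ‖cexp (-(I * ω * y)) * u y‖ ≤ M) :
    ‖cexp (-(I * ω * x)) * u x - 1‖ ≤ K * M * Real.exp (-κ * x) / (κ * ‖ω‖) := by
  have hneg_im : ω.im ≤ (-ω).im := by rw [neg_im]; linarith
  have hT := norm_expTail_potential_mul_le hκ le_rfl hωκ hVbd hx hM
  have hT_neg := norm_expTail_potential_mul_le hκ hneg_im hωκ hVbd hx hM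
  have hdamp := norm_cexp_neg_I_mul_le_one hωim hx
  have hrepr : cexp (-(I * ω * x)) * u x - 1 =
      -(expTail (-ω) (fun y => V y * u y) x -
        cexp (-(I * ω * x)) ^ 2 * expTail ω (fun y => V y * u y) x) / (2 * I * ω) := by
    simp only [mul_assoc (Complex.sin _ / ω)] at hVolt
    rw [hVolt, integral_sin_kernel_eq_expTail hω
      (integrableOn_cexp_mul_potential_mul hκ le_rfl hωκ hV hu hVbd hx hM)
      (integrableOn_cexp_mul_potential_mul hκ hneg_im hωκ hV hu hVbd hx hM)]
    rw [Complex.exp_neg]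
    field_simp
    ring
  have hnum : ‖expTail (-ω) (fun y => V y * u y) x -
      cexp (-(I * ω * x)) ^ 2 * expTail ω (fun y => V y * u y) x‖ ≤
        2 * (K * M * Real.exp (-κ * x) / κ) := by
    refine (norm_sub_le _ _).trans ?_
    rw [norm_mul, norm_pow, two_mul]
    gcongr
    exact (mul_le_of_le_one_left (norm_nonneg _) (pow_le_one₀ (norm_nonneg _) hdamp)).trans hT
  rw [hrepr, norm_div, norm_neg, norm_mul, norm_mul, norm_I, RCLike.norm_ofNat]
  calc _ ≤ 2 * (K * M * Real.exp (-κ * x) / κ) / (2 * 1 * ‖ω‖) := by gcongr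
    _ = _ := by field_simp

theorem norm_cexp_neg_mul_deriv_sub_le (hω : ω ≠ 0) (hκ : 0 < κ) (hωim : ω.im ≤ 0)
    (hωκ : -ω.im ≤ κ / 2) (hV : Continuous V) (hu : Continuous u)
    (hVbd : ∀ y, 0 ≤ y → |V y| ≤ K * Real.exp (-2 * κ * y)) {B : ℝ}
    (hB : ∀ y : ℝ, 0 ≤ y → ‖cexp (-(I * ω * y)) * u y‖ ≤ B)
    (hVolt : ∀ t : ℝ,
      u t = cexp (I * ω * t) - ∫ y in Ici t, Complex.sin (ω * (t - y)) / ω * V y * u y)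
    (hx : 0 < x) (hM : ∀ y, x ≤ y → ‖cexp (-(I * ω * y)) * u y‖ ≤ M) :
    ‖cexp (-(I * ω * x)) * (deriv u x - I * ω * u x)‖ ≤ K * M * Real.exp (-κ * x) / κ := by
  have hneg_im : ω.im ≤ (-ω).im := by rw [neg_im]; linarith
  have hdamp := norm_cexp_neg_I_mul_le_one hωim hx.le
  rw [deriv_sub_mul_eq_of_volterra hω (by fun_prop)
    (integrableOn_cexp_mul_potential_mul hκ le_rfl hωκ hV hu hVbd le_rfl hB)
    (integrableOn_cexp_mul_potential_mul hκ hneg_im hωκ hV hu hVbd le_rfl hB) hx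
    fun t _ => by simpa only [mul_assoc (Complex.sin _ / ω)] using hVolt t,
    norm_mul, norm_neg, norm_mul, ← mul_assoc]
  refine (mul_le_of_le_one_left (norm_nonneg _) ?_).trans
    (norm_expTail_potential_mul_le hκ le_rfl hωκ hVbd hx.le hM)
  exact mul_le_one₀ hdamp (norm_nonneg _) hdamp

theorem norm_cexp_neg_mul_le_two (hω : ω ≠ 0) (hκ : 0 < κ) (hωim : ω.im ≤ 0)
    (hωκ : -ω.im ≤ κ / 2) (hV : Continuous V) (hu : Continuous u)
    (hVbd : ∀ y, 0 ≤ y → |V y| ≤ K * Real.exp (-2 * κ * y)) {B R : ℝ}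
    (hB : ∀ y : ℝ, 0 ≤ y → ‖cexp (-(I * ω * y)) * u y‖ ≤ B)
    (hVolt : ∀ t : ℝ,
      u t = cexp (I * ω * t) - ∫ y in Ici t, Complex.sin (ω * (t - y)) / ω * V y * u y)
    (hR : 0 ≤ R) (hq : K * Real.exp (-κ * R) / (κ * ‖ω‖) ≤ 1 / 2) :
    ∀ y ∈ Ici R, ‖cexp (-(I * ω * y)) * u y‖ ≤ 2 := by
  have hK : 0 ≤ K := by simpa using (abs_nonneg _).trans (hVbd 0 le_rfl)
  have hbdd : BddAbove ((fun y : ℝ => ‖cexp (-(I * ω * y)) * u y‖) '' Ici R) :=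
    ⟨B, by rintro _ ⟨y, hy, rfl⟩; exact hB y (hR.trans hy)⟩
  have := le_div_one_sub_of_bootstrap (c := 1) (q := 1 / 2) (by norm_num) hbdd ?_
  · exact fun y hy => (this y hy).trans_eq (by norm_num)
  intro M hM y hy
  have hM0 : 0 ≤ M := (norm_nonneg _).trans (hM R self_mem_Ici)
  have hRy : R ≤ y := hy
  calc ‖cexp (-(I * ω * y)) * u y‖ ≤ ‖(1 : ℂ)‖ + ‖cexp (-(I * ω * y)) * u y - 1‖ :=
        norm_le_norm_add_norm_sub' _ _
    _ ≤ 1 + K * M * Real.exp (-κ * y) / (κ * ‖ω‖) := by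
        rw [norm_one]
        gcongr
        exact norm_cexp_neg_mul_sub_one_le hω hκ hωim hωκ hV hu hVbd (hVolt y) (hR.trans hRy)
          fun z hz => hM z (hRy.trans hz)
    _ ≤ 1 + K * M * Real.exp (-κ * R) / (κ * ‖ω‖) := by
        gcongr 1 + K * M * Real.exp ?_ / _
        nlinarith
    _ ≤ 1 + 1 / 2 * M := by
        rw [mul_right_comm, mul_div_right_comm]
        gcongr

theorem norm_sub_one_add_norm_deriv_le (hω : ω ≠ 0) (hκ : 0 < κ) (hωim : ω.im ≤ 0)
    (hωκ : -ω.im ≤ κ / 2) (hV : Continuous V) (hu : Continuous u)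
    (hVbd : ∀ y, 0 ≤ y → |V y| ≤ K * Real.exp (-2 * κ * y)) {B R : ℝ}
    (hB : ∀ y : ℝ, 0 ≤ y → ‖cexp (-(I * ω * y)) * u y‖ ≤ B)
    (hVolt : ∀ t : ℝ,
      u t = cexp (I * ω * t) - ∫ y in Ici t, Complex.sin (ω * (t - y)) / ω * V y * u y)
    (hR : 0 < R) (hq : K * Real.exp (-κ * R) / (κ * ‖ω‖) ≤ 1 / 2) (hx : R ≤ x) :
    ‖cexp (-(I * ω * x)) * u x - 1‖ + ‖cexp (-(I * ω * x)) * (deriv u x - I * ω * u x)‖ ≤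
      2 * K * Real.exp (-κ * x) / κ * (1 / ‖ω‖ + 1) := by
  have hx0 : 0 < x := hR.trans_le hx
  have htwo : ∀ y, x ≤ y → ‖cexp (-(I * ω * y)) * u y‖ ≤ 2 := fun y hy =>
    norm_cexp_neg_mul_le_two hω hκ hωim hωκ hV hu hVbd hB hVolt hR.le hq y (hx.trans hy)
  calc _ ≤ K * 2 * Real.exp (-κ * x) / (κ * ‖ω‖) + K * 2 * Real.exp (-κ * x) / κ :=
        add_le_add (norm_cexp_neg_mul_sub_one_le hω hκ hωim hωκ hV hu hVbd (hVolt x) hx0.le htwo)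
          (norm_cexp_neg_mul_deriv_sub_le hω hκ hωim hωκ hV hu hVbd hB hVolt hx0 htwo)
    _ = _ := by field_simp

end Volterra

theorem eventually_exp_neg_mul_le {b ε : ℝ} (hb : 0 < b) (hε : 0 < ε) :
    ∀ᶠ t in atTop, Real.exp (-b * t) ≤ ε := by
  have h := Real.tendsto_exp_neg_atTop_nhds_zero.comp (tendsto_id.const_mul_atTop hb)
  filter_upwards [h.eventually (ge_mem_nhds hε)] with t ht
  simpa [neg_mul] using ht

theorem eventually_sq_le_exp_mul {b : ℝ} (hb : 0 < b) :
    ∀ᶠ t in atTop, t ^ 2 ≤ Real.exp (b * t) := by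
  filter_upwards [(isLittleO_pow_exp_pos_mul_atTop 2 hb).bound one_pos] with t ht
  simpa [abs_of_nonneg (sq_nonneg t)] using ht

theorem le_one_div_of_le_exp_neg {μ t : ℝ} (hμ : 0 < μ) (h : μ ≤ Real.exp (-t)) :
    t ≤ 1 / μ := by
  have hexp : Real.exp t * Real.exp (-t) = 1 := by
    rw [← Real.exp_add, add_neg_cancel, Real.exp_zero]
  rw [le_div_iff₀ hμ]
  nlinarith [Real.add_one_le_exp t, mul_le_mul_of_nonneg_left h (Real.exp_pos t).le]

theorem sq_mul_exp_neg_le {l a κ y : ℝ} (hl : l ^ 2 ≤ Real.exp (a * l)) (hy : 2 * a * l ≤ κ * y) :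
    l ^ 2 * Real.exp (-κ * y) ≤ Real.exp (-a * l) :=
  calc l ^ 2 * Real.exp (-κ * y) ≤ Real.exp (a * l) * Real.exp (-(2 * a) * l) :=
        mul_le_mul hl (Real.exp_le_exp.2 (by linarith)) (Real.exp_pos _).le (Real.exp_pos _).le
    _ = Real.exp (-a * l) := by rw [← Real.exp_add]; ring_nf

theorem stmt_10_general (κ A c₁ c₂ cI : ℝ)
    (hκ : 0 < κ) (hA : 0 < A) (hc₁ : 0 < c₁) (hcI : 0 < cI) :
    ∃ C > 0, ∃ ct > 0, ∃ L₀ : ℕ, 1 ≤ L₀ ∧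
      ∀ ℓ : ℕ, L₀ ≤ ℓ →
      ∀ V : ℝ → ℝ, Continuous V →
        (∀ x : ℝ, |V x| ≤ A * (ℓ : ℝ) ^ 2 * Real.exp (-2 * κ * |x|)) →
      ∀ ω : ℂ, c₁ * (ℓ : ℝ) ≤ ω.re → ω.re ≤ c₂ * (ℓ : ℝ) →
        0 < -ω.im → -ω.im ≤ Real.exp (-cI * (ℓ : ℝ)) →
      ∀ u : ℝ → ℂ,
        (Continuous u ∧ (∃ B : ℝ, ∀ x : ℝ, 0 ≤ x → ‖Complex.exp (-(I * ω * x)) * u x‖ ≤ B) ∧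
          (∀ x : ℝ, u x = Complex.exp (I * ω * x) -
            ∫ y in Set.Ici x, (Complex.sin (ω * ((x : ℂ) - (y : ℂ))) / ω) * (V y : ℂ) * u y)) →
      ∀ x : ℝ, -1 / ω.im ≤ x →
        ‖Complex.exp (-(I * ω * x)) * u x - 1‖ +
          ‖Complex.exp (-(I * ω * x)) * (deriv u x - I * ω * u x)‖ ≤
            C * Real.exp (-ct * (ℓ : ℝ)) := by
  set a := κ * cI / 2 with ha_def
  have ha : 0 < a := by positivity
  obtain ⟨N, hN⟩ := eventually_atTop.1 <| tendsto_natCast_atTop_atTop.eventually <|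
    (eventually_exp_neg_mul_le hcI (half_pos hκ)).and <| (eventually_sq_le_exp_mul ha).and <|
      eventually_exp_neg_mul_le ha (by positivity : 0 < κ * c₁ / (2 * A))
  refine ⟨2 * A / κ * (1 / c₁ + 1), by positivity, a, ha, max N 1, le_max_right _ _, ?_⟩
  intro ℓ hℓ V hV hVbd ω hre _ hμ hμl u ⟨hu, ⟨B, hB⟩, hVolt⟩ x hx
  obtain ⟨hμκ, hl2, hdecay⟩ := hN ℓ (le_of_max_le_left hℓ)
  have hl : (1 : ℝ) ≤ ℓ := by exact_mod_cast le_of_max_le_right hℓ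
  have hω : c₁ ≤ ‖ω‖ := by nlinarith [re_le_norm ω]
  have hR : cI * ℓ ≤ -1 / ω.im := by
    rw [show -1 / ω.im = 1 / -ω.im by rw [div_neg, neg_div]]
    exact le_one_div_of_le_exp_neg hμ (by rwa [← neg_mul])
  have hrate : ∀ y, cI * ℓ ≤ y → (ℓ : ℝ) ^ 2 * Real.exp (-κ * y) ≤ Real.exp (-a * ℓ) :=
    fun y hy => sq_mul_exp_neg_le hl2 (by nlinarith [mul_le_mul_of_nonneg_left hy hκ.le])
  have hq : A * ℓ ^ 2 * Real.exp (-κ * (-1 / ω.im)) / (κ * ‖ω‖) ≤ 1 / 2 :=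
    calc A * ℓ ^ 2 * Real.exp (-κ * (-1 / ω.im)) / (κ * ‖ω‖)
        ≤ A / (κ * c₁) * (ℓ ^ 2 * Real.exp (-κ * (-1 / ω.im))) := by
          rw [div_mul_eq_mul_div, ← mul_assoc]
          gcongr
      _ ≤ A / (κ * c₁) * (κ * c₁ / (2 * A)) := by gcongr; exact (hrate _ hR).trans hdecay
      _ = 1 / 2 := by field_simp
  refine (norm_sub_one_add_norm_deriv_le (K := A * ℓ ^ 2) (norm_pos_iff.1 (hc₁.trans_le hω)) hκ
    (by linarith) (by linarith) hV hu (fun y hy => by simpa [abs_of_nonneg hy] using hVbd y) hB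
    hVolt ((by positivity : 0 < cI * ℓ).trans_le hR) hq hx).trans ?_
  calc 2 * (A * ℓ ^ 2) * Real.exp (-κ * x) / κ * (1 / ‖ω‖ + 1)
      = 2 * A / κ * (1 / ‖ω‖ + 1) * (ℓ ^ 2 * Real.exp (-κ * x)) := by ring
    _ ≤ 2 * A / κ * (1 / c₁ + 1) * Real.exp (-a * ℓ) := by
      gcongr
      exact hrate x (hR.trans hx)

/-- Region III estimate. The solution u₊ = u_{CH_R} of the Volterra
equation normalized at x → +∞ stays exponentially (in ℓ) close to the free wave
e^{iωx} for x ≥ R₂ = −1/Im(ω), for quasinormal-type frequencies ω. -/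
theorem stmt_10 (κ A c₁ c₂ cI : ℝ)
    (hκ : 0 < κ) (hA : 0 < A) (hc₁ : 0 < c₁) (hc₂ : 0 < c₂) (hcI : 0 < cI) :
    ∃ C > 0, ∃ ct > 0, ∃ L₀ : ℕ, 1 ≤ L₀ ∧
      ∀ ℓ : ℕ, L₀ ≤ ℓ →
      ∀ V : ℝ → ℝ, Continuous V →
        (∀ x : ℝ, |V x| ≤ A * (ℓ : ℝ) ^ 2 * Real.exp (-2 * κ * |x|)) →
      ∀ ω : ℂ, c₁ * (ℓ : ℝ) ≤ ω.re → ω.re ≤ c₂ * (ℓ : ℝ) →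
        0 < -ω.im → -ω.im ≤ Real.exp (-cI * (ℓ : ℝ)) →
      ∀ u : ℝ → ℂ,
        (Continuous u ∧ (∃ B : ℝ, ∀ x : ℝ, 0 ≤ x → ‖Complex.exp (-(I * ω * x)) * u x‖ ≤ B) ∧
          (∀ x : ℝ, u x = Complex.exp (I * ω * x) -
            ∫ y in Set.Ici x, (Complex.sin (ω * ((x : ℂ) - (y : ℂ))) / ω) * (V y : ℂ) * u y)) →
      ∀ x : ℝ, -1 / ω.im ≤ x →
        ‖Complex.exp (-(I * ω * x)) * u x - 1‖ +
          ‖Complex.exp (-(I * ω * x)) * (deriv u x - I * ω * u x)‖ ≤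
            C * Real.exp (-ct * (ℓ : ℝ)) :=
  stmt_10_general κ A c₁ c₂ cI hκ hA hc₁ hcI
end

section
/- Let κ > 0, ε > 0, T ∈ ℂ with T ≠ 0, and let ω ∈ ℂ with ω ≠ 0 and 0 ≤ −Im(ω)/κ < 1/2. Let A, B : [0, ε] → ℂ be continuously differentiable with A(0) ≠ 0, and define G(x) := T · x^{−iω/κ} · A(x) + B(x) for x ∈ (0, ε), with the principal branch of the complex power. Then ∫₀^ε |G′(x)|² dx = ∞; in particular G does not belong to H¹((0, ε)). -/
open MeasureTheory Set Complex Filter Topology Asymptotics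

/-!
Put `p = -iω/κ`, so `Re p = -β ≤ 0`. On `(0, ε)`,
`G' = (x^p T A' + B') + x^(p-1) T p A`. Since `A(0) ≠ 0` the last term is of exact order
`x^(p-1)`, while the bracket is `O(x^p) = o(x^(p-1))` because `A'`, `B'` are bounded and
`|x^p| ≥ 1`. Hence `1/x = O(x^(Re p - 1)) = O(G')`, so `|G'|²` dominates `1/x` near `0`,
which is not integrable there: it is the derivative of `log x`, which is unbounded.
-/

lemma Filter.Tendsto.const_isBigO {α E F : Type*} [NormedAddCommGroup E] [NormedAddCommGroup F]
    {l : Filter α} {f : α → E} {y : E} (h : Tendsto f l (𝓝 y)) (hy : y ≠ 0) (c : F) :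
    (fun _ => c) =O[l] f :=
  (isBigO_const_const c (one_ne_zero (α := ℝ)) l).trans <|
    (isBigO_const_left_iff_pos_le_norm one_ne_zero).2
      ⟨‖y‖ / 2, by positivity, h.norm.eventually (le_mem_nhds (half_lt_self (norm_pos_iff.2 hy)))⟩

lemma inv_isBigO_norm_sq_of_inv_isBigO {E : Type*} [NormedAddCommGroup E] {f : ℝ → E}
    (hf : (fun x => x⁻¹) =O[𝓝[>] 0] f) : (fun x => x⁻¹) =O[𝓝[>] 0] fun x => ‖f x‖ ^ 2 := by
  have hsq : (fun x : ℝ => x⁻¹) =O[𝓝[>] 0] fun x => x⁻¹ ^ 2 := by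
    refine IsBigO.of_bound 1 ?_
    filter_upwards [Ioo_mem_nhdsGT one_pos] with x hx
    have h1 : 1 ≤ x⁻¹ := one_le_inv₀ hx.1 |>.2 hx.2.le
    rw [one_mul, norm_pow, Real.norm_of_nonneg (by positivity), sq]
    exact le_mul_of_one_le_left (by positivity) h1
  exact hsq.trans (hf.norm_right.pow 2)

lemma not_integrableOn_Ioo_of_inv_isBigO {F : Type*} [NormedAddCommGroup F] {g : ℝ → F} {ε : ℝ}
    (hε : 0 < ε) (hg : (fun x => x⁻¹) =O[𝓝[>] 0] g) : ¬IntegrableOn g (Ioo 0 ε) := by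
  have hlog : ∀ᶠ x in 𝓝[>] (0 : ℝ), HasDerivAt Real.log x⁻¹ x := by
    filter_upwards [self_mem_nhdsWithin] with x hx using Real.hasDerivAt_log (ne_of_gt hx)
  refine not_integrableOn_of_tendsto_norm_atTop_of_deriv_isBigO_filter _ (Ioo_mem_nhdsGT hε)
    (hlog.mono fun x hx => hx.differentiableAt)
    (tendsto_abs_atBot_atTop.comp Real.tendsto_log_nhdsGT_zero) ?_
  exact hg.congr' (hlog.mono fun x hx => hx.deriv.symm) EventuallyEq.rfl

lemma one_isBigO_ofReal_cpow {p : ℂ} (hp : p.re ≤ 0) :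
    (fun _ => (1 : ℂ)) =O[𝓝[>] 0] fun x : ℝ => (x : ℂ) ^ p := by
  refine IsBigO.of_bound 1 ?_
  filter_upwards [Ioo_mem_nhdsGT one_pos] with x hx
  rw [norm_one, one_mul, norm_cpow_eq_rpow_re_of_pos hx.1]
  exact Real.one_le_rpow_of_pos_of_le_one_of_nonpos hx.1 hx.2.le hp

lemma ofReal_cpow_sub_one_eq (p : ℂ) {x : ℝ} (hx : 0 < x) :
    (x : ℂ) ^ (p - 1) = (x : ℂ)⁻¹ * (x : ℂ) ^ p := by
  rw [cpow_sub _ _ (ofReal_ne_zero.2 hx.ne'), cpow_one, inv_mul_eq_div]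

lemma ofReal_cpow_isLittleO_cpow_sub_one (p : ℂ) :
    (fun x : ℝ => (x : ℂ) ^ p) =o[𝓝[>] 0] fun x : ℝ => (x : ℂ) ^ (p - 1) := by
  have hx : (fun x : ℝ => (x : ℂ)) =o[𝓝[>] 0] fun _ => (1 : ℂ) :=
    (isLittleO_one_iff ℂ).2
      (by simpa using (continuous_ofReal.tendsto 0).mono_left nhdsWithin_le_nhds)
  refine (hx.mul_isBigO (isBigO_refl (fun x : ℝ => (x : ℂ) ^ (p - 1)) _)).congr' ?_ (by simp)
  filter_upwards [self_mem_nhdsWithin] with x (hx : 0 < x)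
  rw [ofReal_cpow_sub_one_eq p hx, mul_inv_cancel_left₀ (ofReal_ne_zero.2 hx.ne')]

lemma inv_isBigO_ofReal_cpow_sub_one {p : ℂ} (hp : p.re ≤ 0) :
    (fun x : ℝ => x⁻¹) =O[𝓝[>] 0] fun x : ℝ => (x : ℂ) ^ (p - 1) := by
  have h := (isBigO_refl (fun x : ℝ => (x : ℂ)⁻¹) _).mul (one_isBigO_ofReal_cpow hp)
  rw [← isBigO_norm_left]
  refine h.norm_left.congr' (by simp) ?_
  filter_upwards [self_mem_nhdsWithin] with x (hx : 0 < x)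
  rw [ofReal_cpow_sub_one_eq p hx]

section ContDiffOnIcc

variable {E : Type*} [NormedAddCommGroup E] [NormedSpace ℝ E] {f : ℝ → E} {a b : ℝ}

lemma ContDiffOn.differentiableAt_of_mem_Ioo (hf : ContDiffOn ℝ 1 f (Icc a b)) {x : ℝ}
    (hx : x ∈ Ioo a b) : DifferentiableAt ℝ f x :=
  (hf.differentiableOn one_ne_zero x (Ioo_subset_Icc_self hx)).differentiableAt
    (Icc_mem_nhds hx.1 hx.2)

lemma ContDiffOn.deriv_isBigO_one_nhdsGT (F : Type*) [Norm F] [One F] [NormOneClass F]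
    (hf : ContDiffOn ℝ 1 f (Icc a b)) (hab : a < b) : deriv f =O[𝓝[>] a] fun _ => (1 : F) := by
  have hcont : ContinuousWithinAt (derivWithin f (Icc a b)) (Ioi a) a :=
    (hf.continuousOn_derivWithin (uniqueDiffOn_Icc hab) le_rfl a
      (left_mem_Icc.2 hab.le)).mono_of_mem_nhdsWithin (Icc_mem_nhdsGT hab)
  refine (hcont.tendsto.isBigO_one F).congr' ?_ EventuallyEq.rfl
  filter_upwards [Ioo_mem_nhdsGT hab] with x hx
  exact derivWithin_of_mem_nhds (Icc_mem_nhds hx.1 hx.2)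

end ContDiffOnIcc

lemma hasDerivAt_mul_ofReal_cpow_mul_add {A B : ℝ → ℂ} {a b : ℂ} {x : ℝ} (T p : ℂ) (hx : 0 < x)
    (hA : HasDerivAt A a x) (hB : HasDerivAt B b x) :
    HasDerivAt (fun y : ℝ => T * (y : ℂ) ^ p * A y + B y)
      ((x : ℂ) ^ p * (T * a) + b + (x : ℂ) ^ (p - 1) * (T * p * A x)) x := by
  have hpow : HasDerivAt (fun y : ℝ => (y : ℂ) ^ p) (p * (x : ℂ) ^ (p - 1)) x :=
    ((hasStrictDerivAt_cpow_const (ofReal_mem_slitPlane.2 hx)).hasDerivAt).comp_ofReal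
  exact (((hpow.const_mul T).mul hA).add hB).congr_deriv (by ring)

theorem stmt_18_general (κ ε : ℝ) (hκ : 0 < κ) (hε : 0 < ε)
    (T : ℂ) (hT : T ≠ 0)
    (ω : ℂ) (hω : ω ≠ 0) (hβ0 : 0 ≤ -ω.im / κ)
    (A B : ℝ → ℂ)
    (hA : ContDiffOn ℝ 1 A (Icc 0 ε)) (hB : ContDiffOn ℝ 1 B (Icc 0 ε))
    (hA0 : A 0 ≠ 0)
    (G : ℝ → ℂ)
    (hG : ∀ x ∈ Ioo (0 : ℝ) ε,
      G x = T * ((x : ℂ)) ^ (-(I * ω) / (κ : ℂ)) * A x + B x) :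
    ¬ IntegrableOn (fun x : ℝ => ‖deriv G x‖ ^ 2) (Ioo 0 ε) := by
  set p : ℂ := -(I * ω) / (κ : ℂ)
  have hp : p ≠ 0 := div_ne_zero (by simpa using hω) (ofReal_ne_zero.2 hκ.ne')
  have hp_re : p.re ≤ 0 := by
    have : p.re = ω.im / κ := by simp [p, div_ofReal_re]
    rw [this]; linarith [neg_div κ ω.im]
  have hderiv : deriv G =ᶠ[𝓝[>] 0] fun x =>
      ((x : ℂ) ^ p * (T * deriv A x) + deriv B x) + (x : ℂ) ^ (p - 1) * (T * p * A x) := by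
    filter_upwards [Ioo_mem_nhdsGT hε] with x hx
    have hGx : G =ᶠ[𝓝 x] fun y : ℝ => T * (y : ℂ) ^ p * A y + B y :=
      eventually_of_mem (Ioo_mem_nhds hx.1 hx.2) hG
    rw [hGx.deriv_eq]
    exact (hasDerivAt_mul_ofReal_cpow_mul_add T p hx.1
      (hA.differentiableAt_of_mem_Ioo hx).hasDerivAt
      (hB.differentiableAt_of_mem_Ioo hx).hasDerivAt).deriv
  have hTpA : Tendsto (fun x => T * p * A x) (𝓝[>] 0) (𝓝 (T * p * A 0)) :=
    ((hA.continuousOn 0 (left_mem_Icc.2 hε.le)).mono_of_mem_nhdsWithin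
      (Icc_mem_nhdsGT hε)).tendsto.const_mul _
  have hmain : (fun x : ℝ => (x : ℂ) ^ (p - 1)) =O[𝓝[>] 0]
      fun x => (x : ℂ) ^ (p - 1) * (T * p * A x) :=
    ((isBigO_refl _ _).mul (hTpA.const_isBigO (by simp [hT, hp, hA0]) 1)).congr_left
      fun x => mul_one _
  have herror : (fun x : ℝ => (x : ℂ) ^ p * (T * deriv A x) + deriv B x) =o[𝓝[>] 0]
      fun x => (x : ℂ) ^ (p - 1) * (T * p * A x) := by
    refine IsBigO.trans_isLittleO ?_ ((ofReal_cpow_isLittleO_cpow_sub_one p).trans_isBigO hmain)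
    refine IsBigO.add ?_ ((hB.deriv_isBigO_one_nhdsGT ℂ hε).trans (one_isBigO_ofReal_cpow hp_re))
    exact ((isBigO_refl _ _).mul ((hA.deriv_isBigO_one_nhdsGT ℂ hε).const_mul_left T)).congr_right
      fun x => mul_one _
  have hinv : (fun x => x⁻¹) =O[𝓝[>] 0] deriv G :=
    (inv_isBigO_ofReal_cpow_sub_one hp_re).trans <|
      hmain.trans (herror.right_isBigO_add.congr' EventuallyEq.rfl hderiv.symm)
  exact not_integrableOn_Ioo_of_inv_isBigO hε (inv_isBigO_norm_sq_of_inv_isBigO hinv)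

/-- H¹ blowup at the Cauchy horizon. If G(x) = T x^{−iω/κ} A(x) + B(x)
with T ≠ 0, ω ≠ 0, 0 ≤ −Im(ω)/κ < 1/2, and A, B continuously differentiable on [0, ε]
with A(0) ≠ 0, then ∫₀^ε |G′|² dx = ∞, i.e. G ∉ H¹((0, ε)). -/
theorem stmt_18 (κ ε : ℝ) (hκ : 0 < κ) (hε : 0 < ε)
    (T : ℂ) (hT : T ≠ 0)
    (ω : ℂ) (hω : ω ≠ 0) (hβ0 : 0 ≤ -ω.im / κ) (hβ : -ω.im / κ < 1 / 2)
    (A B : ℝ → ℂ)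
    (hA : ContDiffOn ℝ 1 A (Icc 0 ε)) (hB : ContDiffOn ℝ 1 B (Icc 0 ε))
    (hA0 : A 0 ≠ 0)
    (G : ℝ → ℂ)
    (hG : ∀ x ∈ Ioo (0 : ℝ) ε,
      G x = T * ((x : ℂ)) ^ (-(I * ω) / (κ : ℂ)) * A x + B x) :
    ¬ IntegrableOn (fun x : ℝ => ‖deriv G x‖ ^ 2) (Ioo 0 ε) :=
  stmt_18_general κ ε hκ hε T hT ω hω hβ0 A B hA hB hA0 G hG
end
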